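/- Let A be a cocommutative color Hopf algebra with adjoint action a ▷ b := φ(|a₂|,|b|) a₁ b S(a₂). Then S(a ▷ b) = a ▷ S(b) for all homogeneous a, b ∈ A. -/

import Mathlib

open TensorProduct

namespace ColorHopfPaper

variable (k : Type*) [Field k] (G : Type*) [CommGroup G]

/-- The "middle interchange" map `(A⊗A)⊗(B⊗B) → (A⊗B)⊗(A⊗B)` built from a braiding
`c : A⊗B → B⊗A` applied to the two middle factors. -/
noncomputable def midMap {A B : Type*} [AddCommGroup A] [Module k A]
    [AddCommGroup B] [Module k B] (c : A ⊗[k] B →ₗ[k] B ⊗[k] A) :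
    (A ⊗[k] A) ⊗[k] (B ⊗[k] B) →ₗ[k] (A ⊗[k] B) ⊗[k] (A ⊗[k] B) :=
  (TensorProduct.assoc k A B (A ⊗[k] B)).symm.toLinearMap ∘ₗ
    (TensorProduct.map LinearMap.id
      ((TensorProduct.assoc k B A B).toLinearMap ∘ₗ
        (TensorProduct.map c LinearMap.id) ∘ₗ
        (TensorProduct.assoc k A B B).symm.toLinearMap)) ∘ₗ
    (TensorProduct.assoc k A A (B ⊗[k] B)).toLinearMap


/-- Generic Hopf kernel `{x : x₁ ⊗ f(x₂) = x ⊗ 1}` of `f`, for a comultiplication `Δ`. -/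
noncomputable def hkerGen {X B : Type*} [AddCommGroup X] [Module k X]
    [AddCommGroup B] [Module k B]
    (Δ : X →ₗ[k] X ⊗[k] X) (f : X →ₗ[k] B) (oneB : B) : Submodule k X :=
  LinearMap.ker (((TensorProduct.map LinearMap.id f) ∘ₗ Δ) -
    (TensorProduct.mk k X B).flip oneB)

/-- A (cocommutative) color Hopf algebra: a cocommutative Hopf monoid in the symmetric
monoidal category of `G`-graded `k`-vector spaces, with braiding given by a
skew-symmetric bicharacter `φ`. -/
structure ColorHopfAlg (H : Type*) [AddCommGroup H] [Module k H] where
  φ : G → G → k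
  φ_ne : ∀ g h : G, φ g h ≠ 0
  φ_mul_left : ∀ g h l : G, φ (g * h) l = φ g l * φ h l
  φ_mul_right : ∀ g h l : G, φ g (h * l) = φ g h * φ g l
  φ_skew : ∀ g h : G, φ g h * φ h g = 1
  grade : G → Submodule k H
  grade_top : ⨆ g : G, grade g = ⊤
  mul : H ⊗[k] H →ₗ[k] H
  one : H
  comul : H →ₗ[k] H ⊗[k] H
  counit : H →ₗ[k] k
  antipode : H →ₗ[k] H
  braid : H ⊗[k] H →ₗ[k] H ⊗[k] H
  braid_apply : ∀ (g h : G) (x y : H), x ∈ grade g → y ∈ grade h →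
    braid (x ⊗ₜ[k] y) = φ g h • (y ⊗ₜ[k] x)
  one_mem : one ∈ grade 1
  mul_mem : ∀ (g h : G) (x y : H), x ∈ grade g → y ∈ grade h →
    mul (x ⊗ₜ[k] y) ∈ grade (g * h)
  antipode_mem : ∀ (g : G) (x : H), x ∈ grade g → antipode x ∈ grade g
  mul_assoc' : ∀ x y z : H,
    mul (mul (x ⊗ₜ[k] y) ⊗ₜ[k] z) = mul (x ⊗ₜ[k] mul (y ⊗ₜ[k] z))
  one_mul' : ∀ x : H, mul (one ⊗ₜ[k] x) = x
  mul_one' : ∀ x : H, mul (x ⊗ₜ[k] one) = x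
  coassoc : (TensorProduct.assoc k H H H).toLinearMap ∘ₗ
      (TensorProduct.map comul LinearMap.id) ∘ₗ comul
      = (TensorProduct.map LinearMap.id comul) ∘ₗ comul
  counit_left : ∀ x : H,
    (TensorProduct.lid k H) ((TensorProduct.map counit LinearMap.id) (comul x)) = x
  counit_right : ∀ x : H,
    (TensorProduct.rid k H) ((TensorProduct.map LinearMap.id counit) (comul x)) = x
  comul_one : comul one = one ⊗ₜ[k] one
  counit_one : counit one = 1
  counit_mul : ∀ x y : H, counit (mul (x ⊗ₜ[k] y)) = counit x * counit y
  comul_mul : comul ∘ₗ mul =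
    (TensorProduct.map mul mul) ∘ₗ midMap k braid ∘ₗ (TensorProduct.map comul comul)
  cocomm : braid ∘ₗ comul = comul
  antipode_left : ∀ x : H,
    mul ((TensorProduct.map antipode LinearMap.id) (comul x)) = counit x • one
  antipode_right : ∀ x : H,
    mul ((TensorProduct.map LinearMap.id antipode) (comul x)) = counit x • one

namespace ColorHopfAlg

variable {k G}
variable {H : Type*} [AddCommGroup H] [Module k H] (C : ColorHopfAlg k G H)

/-- An element is homogeneous if it lies in one of the graded components. -/
def homogeneous (x : H) : Prop := ∃ g : G, x ∈ C.grade g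

/-- The (color) adjoint action `ξ(a ⊗ b) = φ(|a₂|,|b|) a₁ b S(a₂)`. -/
noncomputable def adj : H ⊗[k] H →ₗ[k] H :=
  C.mul ∘ₗ
    (TensorProduct.map LinearMap.id
      (C.mul ∘ₗ (TensorProduct.map LinearMap.id C.antipode) ∘ₗ C.braid)) ∘ₗ
    (TensorProduct.assoc k H H H).toLinearMap ∘ₗ
    (TensorProduct.map C.comul LinearMap.id)

/-- The commutator `[x,y] = φ(|x₂|,|y₁|) x₁y₁S(x₂)S(y₂) = (x ▷ y₁) S(y₂)`. -/
noncomputable def commMap : H ⊗[k] H →ₗ[k] H :=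
  C.mul ∘ₗ (TensorProduct.map C.adj C.antipode) ∘ₗ
    (TensorProduct.assoc k H H H).symm.toLinearMap ∘ₗ
    (TensorProduct.map LinearMap.id C.comul)

/-- The comultiplication of the tensor-product (product) coalgebra `H ⊗ H`:
`x ⊗ y ↦ φ(|x₂|,|y₁|) (x₁⊗y₁)⊗(x₂⊗y₂)`. -/
noncomputable def comul2 : H ⊗[k] H →ₗ[k] (H ⊗[k] H) ⊗[k] (H ⊗[k] H) :=
  midMap k C.braid ∘ₗ TensorProduct.map C.comul C.comul

/-- The counit of the tensor-product coalgebra `H ⊗ H`. -/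
noncomputable def counit2 : H ⊗[k] H →ₗ[k] k :=
  (TensorProduct.lid k k).toLinearMap ∘ₗ TensorProduct.map C.counit C.counit

/-- `V` is a (graded) color Hopf subalgebra of `H`. -/
structure IsCHSub (V : Submodule k H) : Prop where
  one_mem : C.one ∈ V
  mul_mem : ∀ x ∈ V, ∀ y ∈ V, C.mul (x ⊗ₜ[k] y) ∈ V
  comul_mem : ∀ x ∈ V,
    C.comul x ∈ LinearMap.range (TensorProduct.map V.subtype V.subtype)
  antipode_mem : ∀ x ∈ V, C.antipode x ∈ V
  graded : ∀ x ∈ V, x ∈ Submodule.span k {y : H | y ∈ V ∧ ∃ g : G, y ∈ C.grade g}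

/-- `V` is normal: closed under the adjoint action of all of `H`. -/
def IsNormal (V : Submodule k H) : Prop :=
  ∀ a : H, ∀ x ∈ V, C.adj (a ⊗ₜ[k] x) ∈ V

/-- The subalgebra (as a submodule) generated by a set. -/
def genFrom (Sgen : Set H) : Submodule k H :=
  sInf {V : Submodule k H |
    Sgen ⊆ ↑V ∧ C.one ∈ V ∧ ∀ x ∈ V, ∀ y ∈ V, C.mul (x ⊗ₜ[k] y) ∈ V}

/-- The commutator subalgebra `[X,Y]`, generated by all `[x,y]` with `x ∈ V`, `y ∈ W`. -/
def commSub (V W : Submodule k H) : Submodule k H :=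
  C.genFrom {z : H | ∃ x ∈ V, ∃ y ∈ W, z = C.commMap (x ⊗ₜ[k] y)}

/-- The graded subspace `VW` spanned by products `vw`. -/
def prodSpan (V W : Submodule k H) : Submodule k H :=
  Submodule.span k {z : H | ∃ x ∈ V, ∃ y ∈ W, z = C.mul (x ⊗ₜ[k] y)}

/-- The Hopf kernel `Hker(f) = {x : x₁ ⊗ f(x₂) = x ⊗ 1}` of a map `f : H → B`. -/
noncomputable def hkerOf {B : Type*} [AddCommGroup B] [Module k B]
    (CB : ColorHopfAlg k G B) (f : H →ₗ[k] B) : Submodule k H :=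
  LinearMap.ker
    (((TensorProduct.map LinearMap.id f) ∘ₗ C.comul) -
      (TensorProduct.mk k H B).flip CB.one)

end ColorHopfAlg

/-- A morphism of color Hopf algebras. -/
structure IsColorHom {A B : Type*} [AddCommGroup A] [Module k A]
    [AddCommGroup B] [Module k B]
    (CA : ColorHopfAlg k G A) (CB : ColorHopfAlg k G B) (f : A →ₗ[k] B) : Prop where
  map_mul : ∀ x y : A, f (CA.mul (x ⊗ₜ[k] y)) = CB.mul (f x ⊗ₜ[k] f y)
  map_one : f CA.one = CB.one
  map_comul : CB.comul ∘ₗ f = (TensorProduct.map f f) ∘ₗ CA.comul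
  map_counit : CB.counit ∘ₗ f = CA.counit
  map_grade : ∀ g : G, ∀ x ∈ CA.grade g, f x ∈ CB.grade g

/-- A color Hopf crossed module `(A, H, d)`. -/
structure ColorCrossedMod {A H : Type*} [AddCommGroup A] [Module k A]
    [AddCommGroup H] [Module k H]
    (CA : ColorHopfAlg k G A) (CH : ColorHopfAlg k G H) where
  cAH : A ⊗[k] H →ₗ[k] H ⊗[k] A
  cHA : H ⊗[k] A →ₗ[k] A ⊗[k] H
  cAH_apply : ∀ (g h : G) (a : A) (x : H), a ∈ CA.grade g → x ∈ CH.grade h →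
    cAH (a ⊗ₜ[k] x) = CA.φ g h • (x ⊗ₜ[k] a)
  cHA_apply : ∀ (g h : G) (x : H) (a : A), x ∈ CH.grade g → a ∈ CA.grade h →
    cHA (x ⊗ₜ[k] a) = CH.φ g h • (a ⊗ₜ[k] x)
  φ_eq : CH.φ = CA.φ
  act : A ⊗[k] H →ₗ[k] H
  act_one_left : ∀ x : H, act (CA.one ⊗ₜ[k] x) = x
  act_act : ∀ (a b : A) (x : H),
    act (a ⊗ₜ[k] act (b ⊗ₜ[k] x)) = act (CA.mul (a ⊗ₜ[k] b) ⊗ₜ[k] x)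
  act_one : ∀ a : A, act (a ⊗ₜ[k] CH.one) = CA.counit a • CH.one
  counit_act : ∀ (a : A) (x : H),
    CH.counit (act (a ⊗ₜ[k] x)) = CA.counit a * CH.counit x
  comul_act : CH.comul ∘ₗ act =
    (TensorProduct.map act act) ∘ₗ midMap k cAH ∘ₗ
      (TensorProduct.map CA.comul CH.comul)
  act_mul : act ∘ₗ (TensorProduct.map LinearMap.id CH.mul) =
    CH.mul ∘ₗ (TensorProduct.map act act) ∘ₗ midMap k cAH ∘ₗ
      (TensorProduct.map CA.comul LinearMap.id)
  act_grade : ∀ (g h : G) (a : A) (x : H), a ∈ CA.grade g → x ∈ CH.grade h →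
    act (a ⊗ₜ[k] x) ∈ CH.grade (g * h)
  d : H →ₗ[k] A
  d_hom : IsColorHom k G CH CA d
  peiffer₁ : d ∘ₗ act = CA.adj ∘ₗ (TensorProduct.map LinearMap.id d)
  peiffer₂ : act ∘ₗ (TensorProduct.map d LinearMap.id) = CH.adj

namespace ColorCrossedMod

variable {k G}
variable {A H : Type*} [AddCommGroup A] [Module k A] [AddCommGroup H] [Module k H]
variable {CA : ColorHopfAlg k G A} {CH : ColorHopfAlg k G H}

/-- The multiplication of the semi-direct (smash) product `H ⋊ A`:
`(h⊗a)(h'⊗a') = φ(|a₂|,|h'|) h (a₁·h') ⊗ a₂a'`. -/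
noncomputable def smashMul (M : ColorCrossedMod k G CA CH) : (H ⊗[k] A) ⊗[k] (H ⊗[k] A) →ₗ[k] H ⊗[k] A :=
  (TensorProduct.map CH.mul CA.mul) ∘ₗ
  (TensorProduct.assoc k (H ⊗[k] H) A A).toLinearMap ∘ₗ
  (TensorProduct.map (TensorProduct.assoc k H H A).symm.toLinearMap LinearMap.id) ∘ₗ
  (TensorProduct.map
    (TensorProduct.map LinearMap.id (TensorProduct.map M.act LinearMap.id))
    LinearMap.id) ∘ₗ
  (TensorProduct.map
    ((TensorProduct.map LinearMap.id
        ((TensorProduct.assoc k A H A).symm.toLinearMap ∘ₗ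
          (TensorProduct.map LinearMap.id M.cAH) ∘ₗ
          (TensorProduct.assoc k A A H).toLinearMap)) ∘ₗ
      (TensorProduct.assoc k H (A ⊗[k] A) H).toLinearMap)
    LinearMap.id) ∘ₗ
  (TensorProduct.assoc k (H ⊗[k] (A ⊗[k] A)) H A).symm.toLinearMap ∘ₗ
  (TensorProduct.map (TensorProduct.map LinearMap.id CA.comul) LinearMap.id)

/-- The comultiplication of `H ⋊ A` (tensor-product coalgebra twisted by `φ`). -/
noncomputable def smashComul (M : ColorCrossedMod k G CA CH) : H ⊗[k] A →ₗ[k] (H ⊗[k] A) ⊗[k] (H ⊗[k] A) :=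
  midMap k M.cHA ∘ₗ TensorProduct.map CH.comul CA.comul

/-- The counit of `H ⋊ A`. -/
noncomputable def smashCounit (_M : ColorCrossedMod k G CA CH) : H ⊗[k] A →ₗ[k] k :=
  (TensorProduct.lid k k).toLinearMap ∘ₗ TensorProduct.map CH.counit CA.counit

end ColorCrossedMod



/-! ### Auxiliary development for Statement 1 -/

namespace ColorHopfAlg

section Aux

variable {k : Type*} [Field k] {G : Type*} [CommGroup G]
variable {M N : Type*} [AddCommGroup M] [Module k M] [AddCommGroup N] [Module k N]

/-- pure tensors with factors from given sets -/
def tset (s : Set M) (t : Set N) : Set (M ⊗[k] N) :=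
  {z | ∃ a ∈ s, ∃ b ∈ t, z = a ⊗ₜ[k] b}

lemma tset_span {s : Set M} {t : Set N} (hs : Submodule.span k s = ⊤)
    (ht : Submodule.span k t = ⊤) :
    Submodule.span k (tset (k := k) s t) = ⊤ := by
  rw [← top_le_iff, ← TensorProduct.span_tmul_eq_top k M N, Submodule.span_le]
  rintro z ⟨m, n, rfl⟩
  have hm : m ∈ Submodule.span k s := hs ▸ Submodule.mem_top
  have hn : n ∈ Submodule.span k t := ht ▸ Submodule.mem_top
  clear hs ht
  refine Submodule.span_induction (p := fun m _ =>
    ∀ n, n ∈ Submodule.span k t → m ⊗ₜ[k] n ∈ Submodule.span k (tset (k := k) s t))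
    ?_ ?_ ?_ ?_ hm n hn
  · intro x hx n hn
    refine Submodule.span_induction (p := fun n _ =>
      x ⊗ₜ[k] n ∈ Submodule.span k (tset (k := k) s t)) ?_ ?_ ?_ ?_ hn
    · intro y hy; exact Submodule.subset_span ⟨x, hx, y, hy, rfl⟩
    · show x ⊗ₜ[k] (0:N) ∈ Submodule.span k (tset (k := k) s t)
      rw [TensorProduct.tmul_zero]; exact Submodule.zero_mem _
    · intro a b _ _ ha hb; rw [TensorProduct.tmul_add]; exact Submodule.add_mem _ ha hb
    · intro r a _ ha; rw [TensorProduct.tmul_smul]; exact Submodule.smul_mem _ _ ha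
  · intro n _; rw [TensorProduct.zero_tmul]; exact Submodule.zero_mem _
  · intro a b _ _ ha hb n hn; rw [TensorProduct.add_tmul]
    exact Submodule.add_mem _ (ha n hn) (hb n hn)
  · intro r a _ ha n hn; rw [← TensorProduct.smul_tmul']
    exact Submodule.smul_mem _ _ (ha n hn)

variable {H : Type*} [AddCommGroup H] [Module k H] (C : ColorHopfAlg k G H)

/-- set of homogeneous elements -/
def hset : Set H := {x | ∃ g : G, x ∈ C.grade g}

lemma hset_span : Submodule.span k C.hset = ⊤ := by
  rw [← top_le_iff, ← C.grade_top]
  exact iSup_le fun g x hx => Submodule.subset_span ⟨g, hx⟩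

lemma hset2_span : Submodule.span k (tset (k := k) C.hset C.hset) = ⊤ :=
  tset_span C.hset_span C.hset_span

section ExtLemmas

variable {P : Type*} [AddCommGroup P] [Module k P]

lemma ext_h {f g : H →ₗ[k] P}
    (h : ∀ (gx : G) (x : H), x ∈ C.grade gx → f x = g x) : f = g := by
  refine LinearMap.ext_on C.hset_span ?_
  rintro x ⟨gx, hx⟩; exact h gx x hx

lemma ext_h2 {f g : H ⊗[k] H →ₗ[k] P}
    (h : ∀ (gx gy : G) (x y : H), x ∈ C.grade gx → y ∈ C.grade gy →
      f (x ⊗ₜ[k] y) = g (x ⊗ₜ[k] y)) : f = g := by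
  refine LinearMap.ext_on C.hset2_span ?_
  rintro z ⟨x, ⟨gx, hx⟩, y, ⟨gy, hy⟩, rfl⟩; exact h gx gy x y hx hy

lemma ext_h3L {f g : (H ⊗[k] H) ⊗[k] H →ₗ[k] P}
    (h : ∀ (gx gy gz : G) (x y z : H), x ∈ C.grade gx → y ∈ C.grade gy → z ∈ C.grade gz →
      f ((x ⊗ₜ[k] y) ⊗ₜ[k] z) = g ((x ⊗ₜ[k] y) ⊗ₜ[k] z)) : f = g := by
  refine LinearMap.ext_on (tset_span C.hset2_span C.hset_span) ?_
  rintro w ⟨t, ⟨x, ⟨gx, hx⟩, y, ⟨gy, hy⟩, rfl⟩, z, ⟨gz, hz⟩, rfl⟩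
  exact h gx gy gz x y z hx hy hz

lemma ext_h3R {f g : H ⊗[k] (H ⊗[k] H) →ₗ[k] P}
    (h : ∀ (gx gy gz : G) (x y z : H), x ∈ C.grade gx → y ∈ C.grade gy → z ∈ C.grade gz →
      f (x ⊗ₜ[k] (y ⊗ₜ[k] z)) = g (x ⊗ₜ[k] (y ⊗ₜ[k] z))) : f = g := by
  refine LinearMap.ext_on (tset_span C.hset_span C.hset2_span) ?_
  rintro w ⟨x, ⟨gx, hx⟩, t, ⟨y, ⟨gy, hy⟩, z, ⟨gz, hz⟩, rfl⟩, rfl⟩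
  exact h gx gy gz x y z hx hy hz

lemma ext_h4 {f g : (H ⊗[k] H) ⊗[k] (H ⊗[k] H) →ₗ[k] P}
    (h : ∀ (gx gy gu gv : G) (x y u v : H),
      x ∈ C.grade gx → y ∈ C.grade gy → u ∈ C.grade gu → v ∈ C.grade gv →
      f ((x ⊗ₜ[k] y) ⊗ₜ[k] (u ⊗ₜ[k] v)) = g ((x ⊗ₜ[k] y) ⊗ₜ[k] (u ⊗ₜ[k] v))) : f = g := by
  refine LinearMap.ext_on (tset_span C.hset2_span C.hset2_span) ?_
  rintro w ⟨t, ⟨x, ⟨gx, hx⟩, y, ⟨gy, hy⟩, rfl⟩, t', ⟨u, ⟨gu, hu⟩, v, ⟨gv, hv⟩, rfl⟩, rfl⟩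
  exact h gx gy gu gv x y u v hx hy hu hv

lemma ext_h6 {f g : ((H ⊗[k] H) ⊗[k] (H ⊗[k] H)) ⊗[k] (H ⊗[k] H) →ₗ[k] P}
    (h : ∀ (gx gy gu gv gs gt : G) (x y u v s t : H),
      x ∈ C.grade gx → y ∈ C.grade gy → u ∈ C.grade gu → v ∈ C.grade gv →
      s ∈ C.grade gs → t ∈ C.grade gt →
      f (((x ⊗ₜ[k] y) ⊗ₜ[k] (u ⊗ₜ[k] v)) ⊗ₜ[k] (s ⊗ₜ[k] t)) =
      g (((x ⊗ₜ[k] y) ⊗ₜ[k] (u ⊗ₜ[k] v)) ⊗ₜ[k] (s ⊗ₜ[k] t))) : f = g := by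
  refine LinearMap.ext_on (tset_span (tset_span C.hset2_span C.hset2_span) C.hset2_span) ?_
  rintro w ⟨t2, ⟨t0, ⟨x, ⟨gx, hx⟩, y, ⟨gy, hy⟩, rfl⟩, t1, ⟨u, ⟨gu, hu⟩, v, ⟨gv, hv⟩, rfl⟩, rfl⟩,
    t3, ⟨s, ⟨gs, hs⟩, t, ⟨gt, ht⟩, rfl⟩, rfl⟩
  exact h gx gy gu gv gs gt x y u v s t hx hy hu hv hs ht

end ExtLemmas

lemma φ_one_left (h : G) : C.φ 1 h = 1 := by
  have h1 := C.φ_mul_left 1 1 h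
  rw [one_mul] at h1
  have := mul_left_cancel₀ (C.φ_ne 1 h) (by rw [← h1, mul_one] : C.φ 1 h * 1 = C.φ 1 h * C.φ 1 h)
  exact this.symm

lemma φ_one_right (g : G) : C.φ g 1 = 1 := by
  have h1 := C.φ_mul_right g 1 1
  rw [one_mul] at h1
  have := mul_left_cancel₀ (C.φ_ne g 1) (by rw [← h1, mul_one] : C.φ g 1 * 1 = C.φ g 1 * C.φ g 1)
  exact this.symm

lemma braid_braid : C.braid ∘ₗ C.braid = LinearMap.id := by
  apply C.ext_h2
  intro gx gy x y hx hy
  simp only [LinearMap.comp_apply, LinearMap.id_apply, C.braid_apply gx gy x y hx hy,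
    map_smul, C.braid_apply gy gx y x hy hx, smul_smul]
  rw [C.φ_skew gx gy, one_smul]

lemma braid_id_antipode :
    C.braid ∘ₗ TensorProduct.map LinearMap.id C.antipode
      = TensorProduct.map C.antipode LinearMap.id ∘ₗ C.braid := by
  apply C.ext_h2
  intro gx gy x y hx hy
  simp only [LinearMap.comp_apply, TensorProduct.map_tmul, LinearMap.id_apply]
  rw [C.braid_apply gx gy x (C.antipode y) hx (C.antipode_mem gy y hy),
    C.braid_apply gx gy x y hx hy]
  simp [TensorProduct.map_tmul]

lemma braid_one_left : ∀ y : H, C.braid (C.one ⊗ₜ[k] y) = y ⊗ₜ[k] C.one := by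
  have : C.braid ∘ₗ (TensorProduct.mk k H H C.one)
      = (TensorProduct.mk k H H).flip C.one := by
    apply C.ext_h
    intro gy y hy
    simp only [LinearMap.comp_apply, TensorProduct.mk_apply, LinearMap.flip_apply]
    rw [C.braid_apply 1 gy C.one y C.one_mem hy, C.φ_one_left, one_smul]
  intro y; exact LinearMap.congr_fun this y


/-! ### structural lemmas -/

section Structural

variable {P₁ P₂ P₃ Q₁ Q₂ Q₃ : Type*}
  [AddCommGroup P₁] [Module k P₁] [AddCommGroup P₂] [Module k P₂]
  [AddCommGroup P₃] [Module k P₃] [AddCommGroup Q₁] [Module k Q₁]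
  [AddCommGroup Q₂] [Module k Q₂] [AddCommGroup Q₃] [Module k Q₃]

lemma lequiv_comp_symm {M' N' : Type*} [AddCommGroup M'] [Module k M']
    [AddCommGroup N'] [Module k N'] (e : M' ≃ₗ[k] N') :
    e.toLinearMap ∘ₗ e.symm.toLinearMap = LinearMap.id := by
  ext x; simp

lemma lequiv_symm_comp {M' N' : Type*} [AddCommGroup M'] [Module k M']
    [AddCommGroup N'] [Module k N'] (e : M' ≃ₗ[k] N') :
    e.symm.toLinearMap ∘ₗ e.toLinearMap = LinearMap.id := by
  ext x; simp

lemma assoc_nat (f : P₁ →ₗ[k] Q₁) (g : P₂ →ₗ[k] Q₂) (h : P₃ →ₗ[k] Q₃) :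
    (TensorProduct.assoc k Q₁ Q₂ Q₃).toLinearMap ∘ₗ
      (TensorProduct.map (TensorProduct.map f g) h) =
    (TensorProduct.map f (TensorProduct.map g h)) ∘ₗ
      (TensorProduct.assoc k P₁ P₂ P₃).toLinearMap := by
  apply TensorProduct.ext_threefold
  intro x y z
  simp

lemma assoc_symm_nat (f : P₁ →ₗ[k] Q₁) (g : P₂ →ₗ[k] Q₂) (h : P₃ →ₗ[k] Q₃) :
    (TensorProduct.map (TensorProduct.map f g) h) ∘ₗ
      (TensorProduct.assoc k P₁ P₂ P₃).symm.toLinearMap =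
    (TensorProduct.assoc k Q₁ Q₂ Q₃).symm.toLinearMap ∘ₗ
      (TensorProduct.map f (TensorProduct.map g h)) := by
  refine LinearMap.ext fun z => ?_
  have h1 := LinearMap.congr_fun (assoc_nat (k := k) f g h)
    ((TensorProduct.assoc k P₁ P₂ P₃).symm z)
  simp only [LinearMap.comp_apply, LinearEquiv.coe_coe, LinearEquiv.apply_symm_apply] at h1
  simp only [LinearMap.comp_apply, LinearEquiv.coe_coe]
  rw [← h1, LinearEquiv.symm_apply_apply]

end Structural

section Aux2

variable {k : Type*} [Field k] {G : Type*} [CommGroup G]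
variable {H : Type*} [AddCommGroup H] [Module k H] (C : ColorHopfAlg k G H)

/-- abbreviation for the associator on `H,H,H` -/
noncomputable abbrev A1 : (H ⊗[k] H) ⊗[k] H ≃ₗ[k] H ⊗[k] (H ⊗[k] H) :=
  TensorProduct.assoc k H H H

/-- the hexagon braiding `H ⊗ (H⊗H) → (H⊗H) ⊗ H` -/
noncomputable def cR : H ⊗[k] (H ⊗[k] H) →ₗ[k] (H ⊗[k] H) ⊗[k] H :=
  (A1 (k := k) (H := H)).symm.toLinearMap ∘ₗ
    (TensorProduct.map LinearMap.id C.braid) ∘ₗ (A1 (k := k) (H := H)).toLinearMap ∘ₗ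
    (TensorProduct.map C.braid LinearMap.id) ∘ₗ (A1 (k := k) (H := H)).symm.toLinearMap

/-- the hexagon braiding `(H⊗H) ⊗ H → H ⊗ (H⊗H)` -/
noncomputable def cLL : (H ⊗[k] H) ⊗[k] H →ₗ[k] H ⊗[k] (H ⊗[k] H) :=
  (A1 (k := k) (H := H)).toLinearMap ∘ₗ
    (TensorProduct.map C.braid LinearMap.id) ∘ₗ (A1 (k := k) (H := H)).symm.toLinearMap ∘ₗ
    (TensorProduct.map LinearMap.id C.braid) ∘ₗ (A1 (k := k) (H := H)).toLinearMap

lemma cR_tmul (u v b : H) :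
    C.cR (u ⊗ₜ[k] (v ⊗ₜ[k] b)) =
      (A1 (k := k) (H := H)).symm ((TensorProduct.map LinearMap.id C.braid)
        ((A1 (k := k) (H := H)) ((C.braid (u ⊗ₜ[k] v)) ⊗ₜ[k] b))) := by
  rw [cR]
  simp only [LinearMap.comp_apply, LinearEquiv.coe_coe, TensorProduct.assoc_symm_tmul,
    TensorProduct.map_tmul, LinearMap.id_apply]

lemma cLL_tmul (z : H ⊗[k] H) (b : H) :
    C.cLL (z ⊗ₜ[k] b) =
      (A1 (k := k) (H := H)) ((TensorProduct.map C.braid LinearMap.id)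
        ((A1 (k := k) (H := H)).symm ((TensorProduct.map LinearMap.id C.braid)
          ((A1 (k := k) (H := H)) (z ⊗ₜ[k] b))))) := by
  rw [cLL]
  simp only [LinearMap.comp_apply, LinearEquiv.coe_coe]

lemma cR_homog {gx gy gz : G} {x y z : H} (hx : x ∈ C.grade gx) (hy : y ∈ C.grade gy)
    (hz : z ∈ C.grade gz) :
    C.cR (x ⊗ₜ[k] (y ⊗ₜ[k] z)) = (C.φ gx gy * C.φ gx gz) • ((y ⊗ₜ[k] z) ⊗ₜ[k] x) := by
  rw [cR_tmul, C.braid_apply gx gy x y hx hy, ← TensorProduct.smul_tmul',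
    map_smul, map_smul, map_smul]
  simp only [LinearEquiv.coe_coe, TensorProduct.assoc_tmul, TensorProduct.map_tmul,
    LinearMap.id_apply]
  rw [C.braid_apply gx gz x z hx hz]
  simp only [TensorProduct.tmul_smul, map_smul, TensorProduct.assoc_symm_tmul, smul_smul]

lemma cLL_homog {gx gy gz : G} {x y z : H} (hx : x ∈ C.grade gx) (hy : y ∈ C.grade gy)
    (hz : z ∈ C.grade gz) :
    C.cLL ((x ⊗ₜ[k] y) ⊗ₜ[k] z) = (C.φ gy gz * C.φ gx gz) • (z ⊗ₜ[k] (x ⊗ₜ[k] y)) := by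
  rw [cLL_tmul]
  simp only [LinearEquiv.coe_coe, TensorProduct.assoc_tmul, TensorProduct.map_tmul,
    LinearMap.id_apply]
  rw [C.braid_apply gy gz y z hy hz]
  simp only [TensorProduct.tmul_smul, map_smul, TensorProduct.assoc_symm_tmul,
    TensorProduct.map_tmul, LinearMap.id_apply]
  rw [C.braid_apply gx gz x z hx hz]
  simp only [← TensorProduct.smul_tmul', map_smul, smul_smul, LinearEquiv.coe_coe,
    TensorProduct.assoc_tmul]

lemma blockR (N : H ⊗[k] H →ₗ[k] H)
    (hN : ∀ (gx gy : G) (x y : H), x ∈ C.grade gx → y ∈ C.grade gy →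
      N (x ⊗ₜ[k] y) ∈ C.grade (gx * gy)) :
    C.braid ∘ₗ TensorProduct.map LinearMap.id N = TensorProduct.map N LinearMap.id ∘ₗ C.cR := by
  apply C.ext_h3R
  intro gx gy gz x y z hx hy hz
  simp only [LinearMap.comp_apply, TensorProduct.map_tmul, LinearMap.id_apply]
  rw [C.braid_apply gx (gy * gz) x (N (y ⊗ₜ[k] z)) hx (hN gy gz y z hy hz),
    C.cR_homog hx hy hz]
  simp only [map_smul, TensorProduct.map_tmul, LinearMap.id_apply]
  rw [C.φ_mul_right]

lemma blockL (N : H ⊗[k] H →ₗ[k] H)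
    (hN : ∀ (gx gy : G) (x y : H), x ∈ C.grade gx → y ∈ C.grade gy →
      N (x ⊗ₜ[k] y) ∈ C.grade (gx * gy)) :
    TensorProduct.map LinearMap.id N ∘ₗ C.cLL = C.braid ∘ₗ TensorProduct.map N LinearMap.id := by
  apply C.ext_h3L
  intro gx gy gz x y z hx hy hz
  simp only [LinearMap.comp_apply, TensorProduct.map_tmul, LinearMap.id_apply]
  rw [C.cLL_homog hx hy hz, C.braid_apply (gx * gy) gz (N (x ⊗ₜ[k] y)) z (hN gx gy x y hx hy) hz]
  simp only [map_smul, TensorProduct.map_tmul, LinearMap.id_apply]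
  rw [C.φ_mul_left]
  ring_nf

/-! mid and m₂ -/

/-- the mid map specialised to the braid of `C` -/
noncomputable abbrev mid : (H ⊗[k] H) ⊗[k] (H ⊗[k] H) →ₗ[k] (H ⊗[k] H) ⊗[k] (H ⊗[k] H) :=
  midMap k C.braid

lemma mid_tmul (x y u v : H) :
    C.mid ((x ⊗ₜ[k] y) ⊗ₜ[k] (u ⊗ₜ[k] v)) =
      (TensorProduct.map (TensorProduct.mk k H H x) ((TensorProduct.mk k H H).flip v))
        (C.braid (y ⊗ₜ[k] u)) := by
  simp only [midMap, LinearMap.comp_apply, LinearEquiv.coe_coe, TensorProduct.assoc_tmul,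
    TensorProduct.map_tmul, LinearMap.id_apply, TensorProduct.assoc_symm_tmul]
  induction C.braid (y ⊗ₜ[k] u) using TensorProduct.induction_on with
  | zero => simp
  | tmul p q => simp
  | add a b ha hb =>
    simp only [TensorProduct.add_tmul, TensorProduct.tmul_add, map_add, ha, hb]

lemma mid_homog {gy gu : G} (x : H) {y u : H} (v : H) (hy : y ∈ C.grade gy)
    (hu : u ∈ C.grade gu) :
    C.mid ((x ⊗ₜ[k] y) ⊗ₜ[k] (u ⊗ₜ[k] v)) =
      C.φ gy gu • ((x ⊗ₜ[k] u) ⊗ₜ[k] (y ⊗ₜ[k] v)) := by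
  rw [C.mid_tmul, C.braid_apply gy gu y u hy hu]
  simp

/-- multiplication on `H ⊗ H` -/
noncomputable def m₂ : (H ⊗[k] H) ⊗[k] (H ⊗[k] H) →ₗ[k] H ⊗[k] H :=
  (TensorProduct.map C.mul C.mul) ∘ₗ C.mid

lemma m₂_homog {gy gu : G} (x : H) {y u : H} (v : H) (hy : y ∈ C.grade gy)
    (hu : u ∈ C.grade gu) :
    C.m₂ ((x ⊗ₜ[k] y) ⊗ₜ[k] (u ⊗ₜ[k] v)) =
      C.φ gy gu • (C.mul (x ⊗ₜ[k] u) ⊗ₜ[k] C.mul (y ⊗ₜ[k] v)) := by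
  rw [m₂, LinearMap.comp_apply, C.mid_homog x v hy hu]
  simp

lemma M1 : C.mid ∘ₗ TensorProduct.map LinearMap.id (TensorProduct.map C.antipode C.antipode)
    = TensorProduct.map (TensorProduct.map LinearMap.id C.antipode)
        (TensorProduct.map LinearMap.id C.antipode) ∘ₗ C.mid := by
  apply C.ext_h4
  intro gx gy gu gv x y u v hx hy hu hv
  simp only [LinearMap.comp_apply, TensorProduct.map_tmul, LinearMap.id_apply]
  rw [C.mid_homog x (C.antipode v) hy (C.antipode_mem gu u hu),
    C.mid_homog x v hy hu]
  simp

lemma M2 : C.mid ∘ₗ TensorProduct.map (TensorProduct.map C.antipode C.antipode) LinearMap.id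
    = TensorProduct.map (TensorProduct.map C.antipode LinearMap.id)
        (TensorProduct.map C.antipode LinearMap.id) ∘ₗ C.mid := by
  apply C.ext_h4
  intro gx gy gu gv x y u v hx hy hu hv
  simp only [LinearMap.comp_apply, TensorProduct.map_tmul, LinearMap.id_apply]
  rw [C.mid_homog (C.antipode x) v (C.antipode_mem gy y hy) hu,
    C.mid_homog x v hy hu]
  simp

lemma m₂_assoc : C.m₂ ∘ₗ TensorProduct.map C.m₂ LinearMap.id
    = C.m₂ ∘ₗ TensorProduct.map LinearMap.id C.m₂ ∘ₗ
      (TensorProduct.assoc k (H ⊗[k] H) (H ⊗[k] H) (H ⊗[k] H)).toLinearMap := by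
  apply C.ext_h6
  intro gx gy gu gv gs gt x y u v s t hx hy hu hv hs ht
  simp only [LinearMap.comp_apply, TensorProduct.map_tmul, LinearMap.id_apply,
    LinearEquiv.coe_coe, TensorProduct.assoc_tmul]
  rw [C.m₂_homog x v hy hu, C.m₂_homog u t hv hs,
    ← TensorProduct.smul_tmul', TensorProduct.tmul_smul, map_smul, map_smul,
    C.m₂_homog (C.mul (x ⊗ₜ[k] u)) t (C.mul_mem gy gv y v hy hv) hs,
    C.m₂_homog x (C.mul (v ⊗ₜ[k] t)) hy (C.mul_mem gu gs u s hu hs),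
    C.mul_assoc' x u s, C.mul_assoc' y v t,
    smul_smul, smul_smul, C.φ_mul_left, C.φ_mul_right]
  ring_nf

lemma m₂_one_right : ∀ z : H ⊗[k] H, C.m₂ (z ⊗ₜ[k] (C.one ⊗ₜ[k] C.one)) = z := by
  have : C.m₂ ∘ₗ ((TensorProduct.mk k (H ⊗[k] H) (H ⊗[k] H)).flip (C.one ⊗ₜ[k] C.one))
      = LinearMap.id := by
    apply C.ext_h2
    intro gx gy x y hx hy
    simp only [LinearMap.comp_apply, LinearMap.flip_apply, TensorProduct.mk_apply,
      LinearMap.id_apply]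
    rw [C.m₂_homog x C.one hy C.one_mem, C.φ_one_right, one_smul, C.mul_one', C.mul_one']
  intro z; exact LinearMap.congr_fun this z

lemma m₂_one_left : ∀ z : H ⊗[k] H, C.m₂ ((C.one ⊗ₜ[k] C.one) ⊗ₜ[k] z) = z := by
  have : C.m₂ ∘ₗ ((TensorProduct.mk k (H ⊗[k] H) (H ⊗[k] H)) (C.one ⊗ₜ[k] C.one))
      = LinearMap.id := by
    apply C.ext_h2
    intro gx gy x y hx hy
    simp only [LinearMap.comp_apply, TensorProduct.mk_apply, LinearMap.id_apply]
    rw [C.m₂_homog C.one y C.one_mem hx, C.φ_one_left, one_smul, C.one_mul', C.one_mul']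
  intro z; exact LinearMap.congr_fun this z

/-! counit and antipode map forms -/

/-- `x ↦ ε(x) • 1` -/
noncomputable def eH : H →ₗ[k] H := C.counit.smulRight C.one

@[simp] lemma eH_apply (x : H) : C.eH x = C.counit x • C.one := rfl

lemma antipode_left_map :
    C.mul ∘ₗ TensorProduct.map C.antipode LinearMap.id ∘ₗ C.comul = C.eH := by
  ext x
  simpa using C.antipode_left x

lemma antipode_right_map :
    C.mul ∘ₗ TensorProduct.map LinearMap.id C.antipode ∘ₗ C.comul = C.eH := by
  ext x
  simpa using C.antipode_right x

lemma counit_antipode (x : H) : C.counit (C.antipode x) = C.counit x := by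
  have key : ∀ w : H ⊗[k] H,
      C.counit (C.antipode ((TensorProduct.rid k H)
        ((TensorProduct.map LinearMap.id C.counit) w)))
      = C.counit (C.mul ((TensorProduct.map C.antipode LinearMap.id) w)) := by
    intro w
    induction w using TensorProduct.induction_on with
    | zero => simp
    | tmul a b =>
      simp only [TensorProduct.map_tmul, LinearMap.id_apply, TensorProduct.rid_tmul,
        map_smul, C.counit_mul]
      rw [smul_eq_mul, mul_comm]
    | add a b ha hb => simp only [map_add, ha, hb]
  have h1 := key (C.comul x)
  rw [C.counit_right x] at h1
  rw [h1]
  have h2 := congrArg C.counit (C.antipode_left x)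
  rw [h2, map_smul, C.counit_one, smul_eq_mul, mul_one]

/-! cocommutativity collapse -/

lemma mid_comul_comul :
    C.mid ∘ₗ TensorProduct.map C.comul C.comul ∘ₗ C.comul
      = TensorProduct.map C.comul C.comul ∘ₗ C.comul := by
  set A4 := TensorProduct.assoc k H H (H ⊗[k] H) with hA4
  set inner : H ⊗[k] (H ⊗[k] H) →ₗ[k] H ⊗[k] (H ⊗[k] H) :=
    (A1 (k := k) (H := H)).toLinearMap ∘ₗ (TensorProduct.map C.braid LinearMap.id) ∘ₗ
      (A1 (k := k) (H := H)).symm.toLinearMap with hinner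
  set X : H →ₗ[k] H ⊗[k] (H ⊗[k] H) :=
    (A1 (k := k) (H := H)).toLinearMap ∘ₗ (TensorProduct.map C.comul LinearMap.id) ∘ₗ C.comul
    with hX
  have midform : C.mid = A4.symm.toLinearMap ∘ₗ
      TensorProduct.map LinearMap.id inner ∘ₗ A4.toLinearMap := rfl
  have stepA : TensorProduct.map C.comul C.comul ∘ₗ C.comul
      = A4.symm.toLinearMap ∘ₗ TensorProduct.map LinearMap.id X ∘ₗ C.comul := by
    have e1 : TensorProduct.map C.comul C.comul
        = TensorProduct.map LinearMap.id C.comul ∘ₗ TensorProduct.map C.comul LinearMap.id := by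
      rw [← TensorProduct.map_comp]
      simp
    have e2 : TensorProduct.map C.comul LinearMap.id ∘ₗ C.comul
        = (A1 (k := k) (H := H)).symm.toLinearMap ∘ₗ
          TensorProduct.map LinearMap.id C.comul ∘ₗ C.comul := by
      have := C.coassoc
      rw [← this, ← LinearMap.comp_assoc, ← LinearMap.comp_assoc, lequiv_symm_comp,
        LinearMap.id_comp]
    have e3 : (TensorProduct.map (LinearMap.id (M := H ⊗[k] H)) C.comul) ∘ₗ
        (A1 (k := k) (H := H)).symm.toLinearMap
        = A4.symm.toLinearMap ∘ₗ
          TensorProduct.map LinearMap.id (TensorProduct.map LinearMap.id C.comul) := by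
      have := assoc_symm_nat (k := k) (LinearMap.id (M := H)) (LinearMap.id (M := H)) C.comul
      rw [TensorProduct.map_id] at this
      exact this
    calc TensorProduct.map C.comul C.comul ∘ₗ C.comul
        = TensorProduct.map LinearMap.id C.comul ∘ₗ
            (TensorProduct.map C.comul LinearMap.id ∘ₗ C.comul) := by
          rw [e1, LinearMap.comp_assoc]
      _ = (TensorProduct.map (LinearMap.id (M := H ⊗[k] H)) C.comul ∘ₗ
            (A1 (k := k) (H := H)).symm.toLinearMap) ∘ₗ
            (TensorProduct.map LinearMap.id C.comul ∘ₗ C.comul) := by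
          rw [e2]; simp only [LinearMap.comp_assoc]
      _ = A4.symm.toLinearMap ∘ₗ
            (TensorProduct.map LinearMap.id (TensorProduct.map LinearMap.id C.comul) ∘ₗ
             TensorProduct.map LinearMap.id C.comul) ∘ₗ C.comul := by
          rw [e3]; simp only [LinearMap.comp_assoc]
      _ = A4.symm.toLinearMap ∘ₗ TensorProduct.map LinearMap.id
            (TensorProduct.map LinearMap.id C.comul ∘ₗ C.comul) ∘ₗ C.comul := by
          rw [← TensorProduct.map_comp]; simp
      _ = A4.symm.toLinearMap ∘ₗ TensorProduct.map LinearMap.id X ∘ₗ C.comul := by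
          rw [← C.coassoc]
  have comb : TensorProduct.map C.braid LinearMap.id ∘ₗ
      TensorProduct.map C.comul LinearMap.id
      = TensorProduct.map C.comul (LinearMap.id (M := H)) := by
    rw [← TensorProduct.map_comp, C.cocomm, LinearMap.id_comp]
  have stepC : inner ∘ₗ X = X := by
    ext x
    simp only [hinner, hX, LinearMap.comp_apply, LinearEquiv.coe_coe,
      LinearEquiv.symm_apply_apply]
    congr 1
    exact LinearMap.congr_fun comb (C.comul x)
  have stepCC : TensorProduct.map LinearMap.id inner ∘ₗ
      TensorProduct.map (LinearMap.id (M := H)) X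
      = TensorProduct.map LinearMap.id X := by
    rw [← TensorProduct.map_comp, stepC, LinearMap.id_comp]
  have midsymm : ∀ z, C.mid (A4.symm z)
      = A4.symm ((TensorProduct.map LinearMap.id inner) z) := by
    intro z
    rw [midform]
    simp only [LinearMap.comp_apply, LinearEquiv.coe_coe, LinearEquiv.apply_symm_apply]
  ext x
  have h0 := LinearMap.congr_fun stepA x
  simp only [LinearMap.comp_apply, LinearEquiv.coe_coe] at h0
  simp only [LinearMap.comp_apply, LinearEquiv.coe_coe]
  rw [h0, midsymm]
  congr 1
  exact LinearMap.congr_fun stepCC (C.comul x)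

end Aux2

section Aux3

variable {k : Type*} [Field k] {G : Type*} [CommGroup G]
variable {H : Type*} [AddCommGroup H] [Module k H] (C : ColorHopfAlg k G H)

lemma mul_assoc_map : C.mul ∘ₗ TensorProduct.map C.mul LinearMap.id
    = C.mul ∘ₗ TensorProduct.map LinearMap.id C.mul ∘ₗ (A1 (k := k) (H := H)).toLinearMap := by
  apply TensorProduct.ext_threefold
  intro x y z
  simp [C.mul_assoc']

lemma comul_mul_m₂ : C.comul ∘ₗ C.mul = C.m₂ ∘ₗ TensorProduct.map C.comul C.comul := by
  rw [C.comul_mul]; rfl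

/-- unit for convolution on `Hom(H, H⊗H)` -/
noncomputable def e₂ : H →ₗ[k] H ⊗[k] H := C.counit.smulRight (C.one ⊗ₜ[k] C.one)

@[simp] lemma e₂_apply (x : H) : C.e₂ x = C.counit x • (C.one ⊗ₜ[k] C.one) := rfl

/-- convolution on `Hom(H, H⊗H)` -/
noncomputable def conv₂ (f g : H →ₗ[k] H ⊗[k] H) : H →ₗ[k] H ⊗[k] H :=
  C.m₂ ∘ₗ TensorProduct.map f g ∘ₗ C.comul

lemma conv₂_assoc (f g h : H →ₗ[k] H ⊗[k] H) :
    C.conv₂ (C.conv₂ f g) h = C.conv₂ f (C.conv₂ g h) := by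
  have aux1 : ∀ w : H ⊗[k] H, C.m₂ ((TensorProduct.map (C.conv₂ f g) h) w)
      = (C.m₂ ∘ₗ TensorProduct.map C.m₂ LinearMap.id ∘ₗ
          TensorProduct.map (TensorProduct.map f g) h)
        ((TensorProduct.map C.comul LinearMap.id) w) := by
    intro w
    induction w using TensorProduct.induction_on with
    | zero => simp
    | tmul u v => simp [conv₂]
    | add a b ha hb => simp only [map_add, ha, hb]
  have aux2 : ∀ w : H ⊗[k] H, C.m₂ ((TensorProduct.map f (C.conv₂ g h)) w)
      = (C.m₂ ∘ₗ TensorProduct.map LinearMap.id C.m₂ ∘ₗ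
          TensorProduct.map f (TensorProduct.map g h))
        ((TensorProduct.map LinearMap.id C.comul) w) := by
    intro w
    induction w using TensorProduct.induction_on with
    | zero => simp
    | tmul u v => simp [conv₂]
    | add a b ha hb => simp only [map_add, ha, hb]
  ext x
  have L := aux1 (C.comul x)
  have R := aux2 (C.comul x)
  show C.m₂ ((TensorProduct.map (C.conv₂ f g) h) (C.comul x))
      = C.m₂ ((TensorProduct.map f (C.conv₂ g h)) (C.comul x))
  rw [L, R]
  -- rewrite the right side using coassociativity
  have co := LinearMap.congr_fun C.coassoc x
  simp only [LinearMap.comp_apply, LinearEquiv.coe_coe] at co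
  simp only [LinearMap.comp_apply]
  rw [← co]
  -- now use assoc naturality and m₂ associativity pointwise
  set w₀ := (TensorProduct.map C.comul LinearMap.id) (C.comul x) with hw₀
  have n1 := LinearMap.congr_fun (assoc_nat (k := k) f g h) w₀
  simp only [LinearMap.comp_apply, LinearEquiv.coe_coe] at n1
  have n2 := LinearMap.congr_fun C.m₂_assoc ((TensorProduct.map (TensorProduct.map f g) h) w₀)
  simp only [LinearMap.comp_apply, LinearEquiv.coe_coe] at n2
  rw [n2, n1]

lemma conv₂_unit_left (f : H →ₗ[k] H ⊗[k] H) : C.conv₂ C.e₂ f = f := by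
  have aux : ∀ w : H ⊗[k] H, C.m₂ ((TensorProduct.map C.e₂ f) w)
      = f ((TensorProduct.lid k H) ((TensorProduct.map C.counit LinearMap.id) w)) := by
    intro w
    induction w using TensorProduct.induction_on with
    | zero => simp
    | tmul u v =>
      simp only [TensorProduct.map_tmul, e₂_apply, LinearMap.id_apply,
        TensorProduct.lid_tmul, map_smul]
      rw [← TensorProduct.smul_tmul', map_smul, C.m₂_one_left]
    | add a b ha hb => simp only [map_add, ha, hb]
  ext x
  show C.m₂ ((TensorProduct.map C.e₂ f) (C.comul x)) = f x
  rw [aux, C.counit_left]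

lemma conv₂_unit_right (f : H →ₗ[k] H ⊗[k] H) : C.conv₂ f C.e₂ = f := by
  have aux : ∀ w : H ⊗[k] H, C.m₂ ((TensorProduct.map f C.e₂) w)
      = f ((TensorProduct.rid k H) ((TensorProduct.map LinearMap.id C.counit) w)) := by
    intro w
    induction w using TensorProduct.induction_on with
    | zero => simp
    | tmul u v =>
      simp only [TensorProduct.map_tmul, e₂_apply, LinearMap.id_apply,
        TensorProduct.rid_tmul, map_smul]
      rw [TensorProduct.tmul_smul, map_smul, C.m₂_one_right]
    | add a b ha hb => simp only [map_add, ha, hb]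
  ext x
  show C.m₂ ((TensorProduct.map f C.e₂) (C.comul x)) = f x
  rw [aux, C.counit_right]

lemma conv₂_Δ_ΔS : C.conv₂ C.comul (C.comul ∘ₗ C.antipode) = C.e₂ := by
  have aux : ∀ w : H ⊗[k] H,
      C.m₂ ((TensorProduct.map C.comul (C.comul ∘ₗ C.antipode)) w)
      = C.comul (C.mul ((TensorProduct.map LinearMap.id C.antipode) w)) := by
    intro w
    induction w using TensorProduct.induction_on with
    | zero => simp
    | tmul u v =>
      have key := LinearMap.congr_fun C.comul_mul_m₂ (u ⊗ₜ[k] C.antipode v)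
      simp only [LinearMap.comp_apply, TensorProduct.map_tmul, LinearMap.id_apply] at key ⊢
      rw [← key]
    | add a b ha hb => simp only [map_add, ha, hb]
  ext x
  show C.m₂ ((TensorProduct.map C.comul (C.comul ∘ₗ C.antipode)) (C.comul x)) = C.e₂ x
  rw [aux]
  have := LinearMap.congr_fun C.antipode_right_map x
  simp only [LinearMap.comp_apply] at this
  rw [this]
  simp [C.comul_one]

lemma conv₂_SS2_Δ :
    C.conv₂ (TensorProduct.map C.antipode C.antipode ∘ₗ C.comul) C.comul = C.e₂ := by
  ext x
  show C.m₂ ((TensorProduct.map (TensorProduct.map C.antipode C.antipode ∘ₗ C.comul) C.comul)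
      (C.comul x)) = C.e₂ x
  have dec : TensorProduct.map (TensorProduct.map C.antipode C.antipode ∘ₗ C.comul) C.comul
      = TensorProduct.map (TensorProduct.map C.antipode C.antipode) LinearMap.id ∘ₗ
        TensorProduct.map C.comul C.comul := by
    rw [← TensorProduct.map_comp, LinearMap.id_comp]
  rw [dec]
  simp only [LinearMap.comp_apply]
  set w := (TensorProduct.map C.comul C.comul) (C.comul x) with hw
  have mcc := LinearMap.congr_fun C.mid_comul_comul x
  simp only [LinearMap.comp_apply] at mcc
  -- m₂ = (map mul mul) ∘ mid;  use M2 and mid_comul_comul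
  have e1 : C.m₂ ((TensorProduct.map (TensorProduct.map C.antipode C.antipode) LinearMap.id) w)
      = (TensorProduct.map C.mul C.mul)
        ((TensorProduct.map (TensorProduct.map C.antipode LinearMap.id)
          (TensorProduct.map C.antipode LinearMap.id)) (C.mid w)) := by
    rw [m₂, LinearMap.comp_apply]
    congr 1
    exact LinearMap.congr_fun C.M2 w
  rw [e1, hw, mcc, ← hw]
  have mc := TensorProduct.map_comp C.mul C.mul
    (TensorProduct.map C.antipode LinearMap.id) (TensorProduct.map C.antipode LinearMap.id)
  have step := LinearMap.congr_fun mc w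
  simp only [LinearMap.comp_apply] at step
  rw [← step]
  have g'Δ : (C.mul ∘ₗ TensorProduct.map C.antipode LinearMap.id) ∘ₗ C.comul = C.eH := by
    rw [LinearMap.comp_assoc]; exact C.antipode_left_map
  have mc2 := TensorProduct.map_comp (C.mul ∘ₗ TensorProduct.map C.antipode LinearMap.id)
    (C.mul ∘ₗ TensorProduct.map C.antipode LinearMap.id) C.comul C.comul
  rw [g'Δ] at mc2
  have step2 := LinearMap.congr_fun mc2 (C.comul x)
  simp only [LinearMap.comp_apply] at step2
  rw [hw, ← step2]
  -- (eH ⊗ eH) ∘ Δ = e₂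
  have aux : ∀ w : H ⊗[k] H, (TensorProduct.map C.eH C.eH) w
      = ((TensorProduct.lid k k) ((TensorProduct.map C.counit C.counit) w)) •
          (C.one ⊗ₜ[k] C.one) := by
    intro w
    induction w using TensorProduct.induction_on with
    | zero => simp
    | tmul u v =>
      simp only [TensorProduct.map_tmul, eH_apply, TensorProduct.lid_tmul]
      rw [TensorProduct.smul_tmul, TensorProduct.tmul_smul, TensorProduct.tmul_smul,
        smul_smul, smul_eq_mul, mul_comm]
    | add a b ha hb => simp only [map_add, ha, hb, add_smul]
  rw [aux]
  have aux2 : ∀ w : H ⊗[k] H, (TensorProduct.lid k k) ((TensorProduct.map C.counit C.counit) w)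
      = C.counit ((TensorProduct.rid k H) ((TensorProduct.map LinearMap.id C.counit) w)) := by
    intro w
    induction w using TensorProduct.induction_on with
    | zero => simp
    | tmul u v =>
      simp only [TensorProduct.map_tmul, TensorProduct.lid_tmul, TensorProduct.rid_tmul,
        LinearMap.id_apply, map_smul]
      rw [smul_eq_mul, smul_eq_mul, mul_comm]
    | add a b ha hb => simp only [map_add, ha, hb]
  rw [aux2, C.counit_right]
  simp

/-- `Δ ∘ S = (S ⊗ S) ∘ Δ` -/
lemma comul_antipode :
    C.comul ∘ₗ C.antipode = TensorProduct.map C.antipode C.antipode ∘ₗ C.comul := by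
  have h1 := C.conv₂_Δ_ΔS
  have h3 := C.conv₂_SS2_Δ
  have := calc TensorProduct.map C.antipode C.antipode ∘ₗ C.comul
      = C.conv₂ (TensorProduct.map C.antipode C.antipode ∘ₗ C.comul) C.e₂ :=
        (C.conv₂_unit_right _).symm
    _ = C.conv₂ (TensorProduct.map C.antipode C.antipode ∘ₗ C.comul)
          (C.conv₂ C.comul (C.comul ∘ₗ C.antipode)) := by rw [h1]
    _ = C.conv₂ (C.conv₂ (TensorProduct.map C.antipode C.antipode ∘ₗ C.comul) C.comul)
          (C.comul ∘ₗ C.antipode) := (C.conv₂_assoc _ _ _).symm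
    _ = C.conv₂ C.e₂ (C.comul ∘ₗ C.antipode) := by rw [h3]
    _ = C.comul ∘ₗ C.antipode := C.conv₂_unit_left _
  exact this.symm

/-! convolution on `Hom(H,H)` and `S ∘ S = id` -/

noncomputable def conv (f g : H →ₗ[k] H) : H →ₗ[k] H :=
  C.mul ∘ₗ TensorProduct.map f g ∘ₗ C.comul

lemma conv_assoc (f g h : H →ₗ[k] H) :
    C.conv (C.conv f g) h = C.conv f (C.conv g h) := by
  have aux1 : ∀ w : H ⊗[k] H, C.mul ((TensorProduct.map (C.conv f g) h) w)
      = (C.mul ∘ₗ TensorProduct.map C.mul LinearMap.id ∘ₗ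
          TensorProduct.map (TensorProduct.map f g) h)
        ((TensorProduct.map C.comul LinearMap.id) w) := by
    intro w
    induction w using TensorProduct.induction_on with
    | zero => simp
    | tmul u v => simp [conv]
    | add a b ha hb => simp only [map_add, ha, hb]
  have aux2 : ∀ w : H ⊗[k] H, C.mul ((TensorProduct.map f (C.conv g h)) w)
      = (C.mul ∘ₗ TensorProduct.map LinearMap.id C.mul ∘ₗ
          TensorProduct.map f (TensorProduct.map g h))
        ((TensorProduct.map LinearMap.id C.comul) w) := by
    intro w
    induction w using TensorProduct.induction_on with
    | zero => simp
    | tmul u v => simp [conv]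
    | add a b ha hb => simp only [map_add, ha, hb]
  ext x
  show C.mul ((TensorProduct.map (C.conv f g) h) (C.comul x))
      = C.mul ((TensorProduct.map f (C.conv g h)) (C.comul x))
  rw [aux1 (C.comul x), aux2 (C.comul x)]
  have co := LinearMap.congr_fun C.coassoc x
  simp only [LinearMap.comp_apply, LinearEquiv.coe_coe] at co
  simp only [LinearMap.comp_apply]
  rw [← co]
  set w₀ := (TensorProduct.map C.comul LinearMap.id) (C.comul x) with hw₀
  have n1 := LinearMap.congr_fun (assoc_nat (k := k) f g h) w₀
  simp only [LinearMap.comp_apply, LinearEquiv.coe_coe] at n1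
  have n2 := LinearMap.congr_fun C.mul_assoc_map
    ((TensorProduct.map (TensorProduct.map f g) h) w₀)
  simp only [LinearMap.comp_apply, LinearEquiv.coe_coe] at n2
  rw [n2, n1]

lemma conv_unit_left (f : H →ₗ[k] H) : C.conv C.eH f = f := by
  have aux : ∀ w : H ⊗[k] H, C.mul ((TensorProduct.map C.eH f) w)
      = f ((TensorProduct.lid k H) ((TensorProduct.map C.counit LinearMap.id) w)) := by
    intro w
    induction w using TensorProduct.induction_on with
    | zero => simp
    | tmul u v =>
      simp only [TensorProduct.map_tmul, eH_apply, LinearMap.id_apply,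
        TensorProduct.lid_tmul, map_smul]
      rw [← TensorProduct.smul_tmul', map_smul, C.one_mul']
    | add a b ha hb => simp only [map_add, ha, hb]
  ext x
  show C.mul ((TensorProduct.map C.eH f) (C.comul x)) = f x
  rw [aux, C.counit_left]

lemma conv_unit_right (f : H →ₗ[k] H) : C.conv f C.eH = f := by
  have aux : ∀ w : H ⊗[k] H, C.mul ((TensorProduct.map f C.eH) w)
      = f ((TensorProduct.rid k H) ((TensorProduct.map LinearMap.id C.counit) w)) := by
    intro w
    induction w using TensorProduct.induction_on with
    | zero => simp
    | tmul u v =>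
      simp only [TensorProduct.map_tmul, eH_apply, LinearMap.id_apply,
        TensorProduct.rid_tmul, map_smul]
      rw [TensorProduct.tmul_smul, map_smul, C.mul_one']
    | add a b ha hb => simp only [map_add, ha, hb]
  ext x
  show C.mul ((TensorProduct.map f C.eH) (C.comul x)) = f x
  rw [aux, C.counit_right]

lemma conv_S_id : C.conv C.antipode LinearMap.id = C.eH := C.antipode_left_map

lemma conv_id_S : C.conv LinearMap.id C.antipode = C.eH := C.antipode_right_map

lemma conv_SS_S : C.conv (C.antipode ∘ₗ C.antipode) C.antipode = C.eH := by
  ext x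
  show C.mul ((TensorProduct.map (C.antipode ∘ₗ C.antipode) C.antipode) (C.comul x)) = C.eH x
  have dec : TensorProduct.map (C.antipode ∘ₗ C.antipode) C.antipode
      = TensorProduct.map C.antipode LinearMap.id ∘ₗ
        TensorProduct.map C.antipode C.antipode := by
    rw [← TensorProduct.map_comp, LinearMap.id_comp]
  rw [dec, LinearMap.comp_apply]
  have ca := LinearMap.congr_fun C.comul_antipode x
  simp only [LinearMap.comp_apply] at ca
  rw [← ca]
  have := LinearMap.congr_fun C.antipode_left_map (C.antipode x)
  simp only [LinearMap.comp_apply] at this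
  rw [this]
  simp [C.counit_antipode]

lemma antipode_antipode : C.antipode ∘ₗ C.antipode = LinearMap.id := by
  calc C.antipode ∘ₗ C.antipode
      = C.conv (C.antipode ∘ₗ C.antipode) C.eH := (C.conv_unit_right _).symm
    _ = C.conv (C.antipode ∘ₗ C.antipode) (C.conv C.antipode LinearMap.id) := by
        rw [C.conv_S_id]
    _ = C.conv (C.conv (C.antipode ∘ₗ C.antipode) C.antipode) LinearMap.id :=
        (C.conv_assoc _ _ _).symm
    _ = C.conv C.eH LinearMap.id := by rw [C.conv_SS_S]
    _ = LinearMap.id := C.conv_unit_left _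

section Aux4

variable {k : Type*} [Field k] {G : Type*} [CommGroup G]
variable {H : Type*} [AddCommGroup H] [Module k H] (C : ColorHopfAlg k G H)

/-- `K(a⊗b) = φ b S(a)` -/
noncomputable def Kmap : H ⊗[k] H →ₗ[k] H :=
  C.mul ∘ₗ TensorProduct.map LinearMap.id C.antipode ∘ₗ C.braid

/-- `K̂(a⊗b) = a S(b)` -/
noncomputable def Khat : H ⊗[k] H →ₗ[k] H :=
  C.mul ∘ₗ TensorProduct.map LinearMap.id C.antipode

/-- `J(a⊗b) = S(a S(b))` -/
noncomputable def Jmap : H ⊗[k] H →ₗ[k] H :=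
  C.antipode ∘ₗ C.mul ∘ₗ TensorProduct.map LinearMap.id C.antipode

/-- `h(a⊗b) = φ b a` -/
noncomputable def hmap : H ⊗[k] H →ₗ[k] H := C.mul ∘ₗ C.braid

/-- `E(a⊗b) = ε(a) b` -/
noncomputable def Emap : H ⊗[k] H →ₗ[k] H :=
  (TensorProduct.lid k H).toLinearMap ∘ₗ TensorProduct.map C.counit LinearMap.id

@[simp] lemma Emap_apply (x b : H) : C.Emap (x ⊗ₜ[k] b) = C.counit x • b := by
  simp [Emap]

/-- `δ(a⊗b) = (a₁ ⊗ b̃) ⊗ ã₂` -/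
noncomputable def δmap : H ⊗[k] H →ₗ[k] (H ⊗[k] H) ⊗[k] H :=
  (A1 (k := k) (H := H)).symm.toLinearMap ∘ₗ TensorProduct.map LinearMap.id C.braid ∘ₗ
    (A1 (k := k) (H := H)).toLinearMap ∘ₗ TensorProduct.map C.comul LinearMap.id

lemma δmap_apply (x b : H) :
    C.δmap (x ⊗ₜ[k] b) = (A1 (k := k) (H := H)).symm
      ((TensorProduct.map LinearMap.id C.braid)
        ((A1 (k := k) (H := H)) ((C.comul x) ⊗ₜ[k] b))) := by
  simp [δmap]

/-- the one-sided convolution `F ⊚ G (a⊗b) = F(a₁ ⊗ G(a₂ ⊗ b))` -/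
noncomputable def con (F G : H ⊗[k] H →ₗ[k] H) : H ⊗[k] H →ₗ[k] H :=
  F ∘ₗ TensorProduct.map LinearMap.id G ∘ₗ (A1 (k := k) (H := H)).toLinearMap ∘ₗ
    TensorProduct.map C.comul LinearMap.id

lemma con_apply (F G : H ⊗[k] H →ₗ[k] H) (x b : H) :
    C.con F G (x ⊗ₜ[k] b) = F ((TensorProduct.map LinearMap.id G)
      ((A1 (k := k) (H := H)) ((C.comul x) ⊗ₜ[k] b))) := by
  simp [con]

/-! graded multiplicativity -/

lemma gm_Khat : ∀ (gx gy : G) (x y : H), x ∈ C.grade gx → y ∈ C.grade gy →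
    C.Khat (x ⊗ₜ[k] y) ∈ C.grade (gx * gy) := by
  intro gx gy x y hx hy
  simp only [Khat, LinearMap.comp_apply, TensorProduct.map_tmul, LinearMap.id_apply]
  exact C.mul_mem gx gy x (C.antipode y) hx (C.antipode_mem gy y hy)

lemma gm_Jmap : ∀ (gx gy : G) (x y : H), x ∈ C.grade gx → y ∈ C.grade gy →
    C.Jmap (x ⊗ₜ[k] y) ∈ C.grade (gx * gy) := by
  intro gx gy x y hx hy
  simp only [Jmap, LinearMap.comp_apply, TensorProduct.map_tmul, LinearMap.id_apply]
  exact C.antipode_mem _ _ (C.mul_mem gx gy x (C.antipode y) hx (C.antipode_mem gy y hy))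

lemma gm_hmap : ∀ (gx gy : G) (x y : H), x ∈ C.grade gx → y ∈ C.grade gy →
    C.hmap (x ⊗ₜ[k] y) ∈ C.grade (gx * gy) := by
  intro gx gy x y hx hy
  simp only [hmap, LinearMap.comp_apply]
  rw [C.braid_apply gx gy x y hx hy, map_smul]
  rw [mul_comm gx gy]
  exact Submodule.smul_mem _ _ (C.mul_mem gy gx y x hy hx)

/-! basic braid computation lemmas -/

lemma cR_A1 (w : H ⊗[k] H) (b : H) :
    C.cR ((A1 (k := k) (H := H)) (w ⊗ₜ[k] b))
      = (A1 (k := k) (H := H)).symm ((TensorProduct.map LinearMap.id C.braid)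
        ((A1 (k := k) (H := H)) ((C.braid w) ⊗ₜ[k] b))) := by
  simp only [cR, LinearMap.comp_apply, LinearEquiv.coe_coe, LinearEquiv.symm_apply_apply,
    TensorProduct.map_tmul, LinearMap.id_apply]

lemma con_unit_left (F : H ⊗[k] H →ₗ[k] H) : C.con C.Emap F = F := by
  apply TensorProduct.ext'
  intro x b
  rw [C.con_apply]
  have aux : ∀ w : H ⊗[k] H, C.Emap ((TensorProduct.map LinearMap.id F)
      ((A1 (k := k) (H := H)) (w ⊗ₜ[k] b)))
      = F (((TensorProduct.lid k H) ((TensorProduct.map C.counit LinearMap.id) w)) ⊗ₜ[k] b) := by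
    intro w
    induction w using TensorProduct.induction_on with
    | zero => simp
    | tmul u v =>
      simp only [LinearEquiv.coe_coe, TensorProduct.assoc_tmul, TensorProduct.map_tmul,
        LinearMap.id_apply, Emap_apply, TensorProduct.lid_tmul]
      rw [← TensorProduct.smul_tmul', map_smul]
    | add a c ha hc => simp only [TensorProduct.add_tmul, map_add, ha, hc]
  rw [aux, C.counit_left]

lemma con_unit_right (F : H ⊗[k] H →ₗ[k] H) : C.con F C.Emap = F := by
  apply TensorProduct.ext'
  intro x b
  rw [C.con_apply]
  have aux : ∀ w : H ⊗[k] H, F ((TensorProduct.map LinearMap.id C.Emap)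
      ((A1 (k := k) (H := H)) (w ⊗ₜ[k] b)))
      = F (((TensorProduct.rid k H) ((TensorProduct.map LinearMap.id C.counit) w)) ⊗ₜ[k] b) := by
    intro w
    induction w using TensorProduct.induction_on with
    | zero => simp
    | tmul u v =>
      simp only [LinearEquiv.coe_coe, TensorProduct.assoc_tmul, TensorProduct.map_tmul,
        LinearMap.id_apply, Emap_apply, TensorProduct.rid_tmul]
      rw [TensorProduct.tmul_smul, ← TensorProduct.smul_tmul', map_smul]
    | add a c ha hc => simp only [TensorProduct.add_tmul, map_add, ha, hc]
  rw [aux, C.counit_right]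

lemma con_assoc (F G K : H ⊗[k] H →ₗ[k] H) :
    C.con (C.con F G) K = C.con F (C.con G K) := by
  set Ψ : ((H ⊗[k] H) ⊗[k] H) ⊗[k] H →ₗ[k] H :=
    F ∘ₗ TensorProduct.map LinearMap.id G ∘ₗ
      TensorProduct.map LinearMap.id (TensorProduct.map LinearMap.id K) ∘ₗ
      (TensorProduct.assoc k H H (H ⊗[k] H)).toLinearMap ∘ₗ
      (TensorProduct.assoc k (H ⊗[k] H) H H).toLinearMap with hΨ
  apply TensorProduct.ext'
  intro x b
  have innerL : ∀ (d : H ⊗[k] H) (v : H),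
      Ψ ((d ⊗ₜ[k] v) ⊗ₜ[k] b)
        = F ((TensorProduct.map LinearMap.id G)
            ((A1 (k := k) (H := H)) (d ⊗ₜ[k] (K (v ⊗ₜ[k] b))))) := by
    intro d v
    induction d using TensorProduct.induction_on with
    | zero => simp [hΨ]
    | tmul u₁ u₂ => simp [hΨ]
    | add a c ha hc => simp only [TensorProduct.add_tmul, map_add, ha, hc]
  have auxL : ∀ w : H ⊗[k] H,
      C.con F G ((TensorProduct.map LinearMap.id K) ((A1 (k := k) (H := H)) (w ⊗ₜ[k] b)))
        = Ψ (((TensorProduct.map C.comul LinearMap.id) w) ⊗ₜ[k] b) := by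
    intro w
    induction w using TensorProduct.induction_on with
    | zero => simp
    | tmul u v =>
      simp only [LinearEquiv.coe_coe, TensorProduct.assoc_tmul, TensorProduct.map_tmul,
        LinearMap.id_apply]
      rw [C.con_apply, innerL]
    | add a c ha hc => simp only [TensorProduct.add_tmul, map_add, ha, hc]
  have innerR : ∀ (s : H ⊗[k] H) (u : H),
      Ψ (((A1 (k := k) (H := H)).symm (u ⊗ₜ[k] s)) ⊗ₜ[k] b)
        = F (u ⊗ₜ[k] (G ((TensorProduct.map LinearMap.id K)
            ((A1 (k := k) (H := H)) (s ⊗ₜ[k] b))))) := by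
    intro s u
    induction s using TensorProduct.induction_on with
    | zero => simp [hΨ]
    | tmul v₁ v₂ => simp [hΨ]
    | add a c ha hc =>
      simp only [TensorProduct.tmul_add, TensorProduct.add_tmul, map_add, ha, hc,
        TensorProduct.tmul_add]
  have auxR : ∀ w : H ⊗[k] H,
      F ((TensorProduct.map LinearMap.id (C.con G K)) ((A1 (k := k) (H := H)) (w ⊗ₜ[k] b)))
        = Ψ (((A1 (k := k) (H := H)).symm ((TensorProduct.map LinearMap.id C.comul) w)) ⊗ₜ[k] b)
      := by
    intro w
    induction w using TensorProduct.induction_on with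
    | zero => simp
    | tmul u v =>
      simp only [LinearEquiv.coe_coe, TensorProduct.assoc_tmul, TensorProduct.map_tmul,
        LinearMap.id_apply]
      rw [C.con_apply, innerR]
    | add a c ha hc => simp only [TensorProduct.add_tmul, map_add, ha, hc]
  rw [C.con_apply, C.con_apply, auxL (C.comul x), auxR (C.comul x)]
  have co := LinearMap.congr_fun C.coassoc x
  simp only [LinearMap.comp_apply, LinearEquiv.coe_coe] at co
  rw [← co, LinearEquiv.symm_apply_apply]

/-- `K ⊚ h = E` -/
lemma Kh : C.con C.Kmap C.hmap = C.Emap := by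
  apply TensorProduct.ext'
  intro x b
  rw [C.con_apply]
  -- step 1: K((1⊗h)t) = mul((map h S)(cR t))
  have step1 : ∀ t : H ⊗[k] (H ⊗[k] H),
      C.Kmap ((TensorProduct.map LinearMap.id C.hmap) t)
        = C.mul ((TensorProduct.map C.hmap C.antipode) (C.cR t)) := by
    intro t
    have b1 := LinearMap.congr_fun (C.blockR C.hmap C.gm_hmap) t
    simp only [LinearMap.comp_apply] at b1
    simp only [Kmap, LinearMap.comp_apply]
    rw [b1]
    congr 1
    have mc := TensorProduct.map_comp (LinearMap.id (M := H)) C.antipode C.hmap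
      (LinearMap.id (M := H))
    have := LinearMap.congr_fun mc (C.cR t)
    simp only [LinearMap.comp_apply, LinearMap.comp_id, LinearMap.id_comp] at this
    rw [← this]
  rw [step1]
  -- step 2: cR(A1(Δx ⊗ b)) = δmap-form via cocomm
  rw [C.cR_A1 (C.comul x) b]
  have cc := LinearMap.congr_fun C.cocomm x
  simp only [LinearMap.comp_apply] at cc
  rw [cc]
  -- step 3: mul((map h S) (A1.symm z)) = mul((1⊗Khat)(A1((c⊗1)(A1.symm z))))
  have step3 : ∀ ζ : (H ⊗[k] H) ⊗[k] H,
      C.mul ((TensorProduct.map C.hmap C.antipode) ζ)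
        = C.mul ((TensorProduct.map LinearMap.id C.Khat)
            ((A1 (k := k) (H := H)) ((TensorProduct.map C.braid LinearMap.id) ζ))) := by
    intro ζ
    induction ζ using TensorProduct.induction_on with
    | zero => simp
    | tmul t₀ q =>
      simp only [TensorProduct.map_tmul, LinearMap.id_apply, hmap, LinearMap.comp_apply]
      have inner : ∀ γ : H ⊗[k] H,
          C.mul ((C.mul γ) ⊗ₜ[k] (C.antipode q))
            = C.mul ((TensorProduct.map LinearMap.id C.Khat)
                ((A1 (k := k) (H := H)) (γ ⊗ₜ[k] q))) := by
        intro γ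
        induction γ using TensorProduct.induction_on with
        | zero => simp
        | tmul p₁ p₂ =>
          simp only [LinearEquiv.coe_coe, TensorProduct.assoc_tmul, TensorProduct.map_tmul,
            LinearMap.id_apply, Khat, LinearMap.comp_apply]
          exact C.mul_assoc' p₁ p₂ (C.antipode q)
        | add a c ha hc =>
          simp only [TensorProduct.add_tmul, map_add, ha, hc]
      exact inner (C.braid t₀)
    | add a c ha hc => simp only [map_add, ha, hc]
  rw [step3]
  -- step 4: recognize cLL and use blockL with N = Khat
  rw [← C.cLL_tmul (C.comul x) b]
  have b2 := LinearMap.congr_fun (C.blockL C.Khat C.gm_Khat) ((C.comul x) ⊗ₜ[k] b)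
  simp only [LinearMap.comp_apply] at b2
  rw [b2]
  -- step 5: Khat(Δ x) = ε x • 1
  have e5 : (TensorProduct.map C.Khat LinearMap.id) ((C.comul x) ⊗ₜ[k] b)
      = (C.counit x • C.one) ⊗ₜ[k] b := by
    rw [TensorProduct.map_tmul, LinearMap.id_apply]
    congr 1
    have := LinearMap.congr_fun C.antipode_right_map x
    simp only [LinearMap.comp_apply, eH_apply] at this
    exact this
  rw [e5, ← TensorProduct.smul_tmul', map_smul, map_smul, C.braid_one_left, C.mul_one']
  simp

end Aux4

section Aux5

variable {k : Type*} [Field k] {G : Type*} [CommGroup G]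
variable {H : Type*} [AddCommGroup H] [Module k H] (C : ColorHopfAlg k G H)

lemma s2map : TensorProduct.map C.comul C.comul ∘ₗ TensorProduct.map LinearMap.id C.antipode
    = TensorProduct.map LinearMap.id (TensorProduct.map C.antipode C.antipode) ∘ₗ
      TensorProduct.map C.comul C.comul := by
  rw [← TensorProduct.map_comp, ← TensorProduct.map_comp, LinearMap.comp_id,
    LinearMap.id_comp, C.comul_antipode]

lemma s3map : C.m₂ ∘ₗ TensorProduct.map LinearMap.id (TensorProduct.map C.antipode C.antipode)
    = TensorProduct.map C.Khat C.Khat ∘ₗ C.mid := by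
  calc C.m₂ ∘ₗ TensorProduct.map LinearMap.id (TensorProduct.map C.antipode C.antipode)
      = TensorProduct.map C.mul C.mul ∘ₗ
          (C.mid ∘ₗ TensorProduct.map LinearMap.id (TensorProduct.map C.antipode C.antipode))
        := rfl
    _ = TensorProduct.map C.mul C.mul ∘ₗ
          (TensorProduct.map (TensorProduct.map LinearMap.id C.antipode)
            (TensorProduct.map LinearMap.id C.antipode) ∘ₗ C.mid) := by rw [C.M1]
    _ = (TensorProduct.map C.mul C.mul ∘ₗ
          TensorProduct.map (TensorProduct.map LinearMap.id C.antipode)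
            (TensorProduct.map LinearMap.id C.antipode)) ∘ₗ C.mid := rfl
    _ = TensorProduct.map C.Khat C.Khat ∘ₗ C.mid := by rw [← TensorProduct.map_comp]; rfl

lemma lam_exp : C.mul ∘ₗ TensorProduct.map C.antipode LinearMap.id ∘ₗ C.comul ∘ₗ C.mul ∘ₗ
      TensorProduct.map LinearMap.id C.antipode
    = C.mul ∘ₗ TensorProduct.map C.Jmap C.Khat ∘ₗ C.mid ∘ₗ
      TensorProduct.map C.comul C.comul := by
  refine LinearMap.ext fun z => ?_
  simp only [LinearMap.comp_apply]
  have e1 := LinearMap.congr_fun C.comul_mul_m₂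
    ((TensorProduct.map LinearMap.id C.antipode) z)
  simp only [LinearMap.comp_apply] at e1
  rw [e1]
  have e2 := LinearMap.congr_fun C.s2map z
  simp only [LinearMap.comp_apply] at e2
  rw [e2]
  have e3 := LinearMap.congr_fun C.s3map ((TensorProduct.map C.comul C.comul) z)
  simp only [LinearMap.comp_apply] at e3
  rw [e3]
  have e4 : TensorProduct.map C.antipode LinearMap.id ∘ₗ TensorProduct.map C.Khat C.Khat
      = TensorProduct.map C.Jmap C.Khat := by
    rw [← TensorProduct.map_comp, LinearMap.id_comp]; rfl
  have := LinearMap.congr_fun e4 (C.mid ((TensorProduct.map C.comul C.comul) z))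
  simp only [LinearMap.comp_apply] at this
  rw [this]

/-- helper for the big collapse -/
noncomputable def Gmap : ((H ⊗[k] H) ⊗[k] H) ⊗[k] H →ₗ[k] H :=
  C.mul ∘ₗ TensorProduct.map C.Jmap C.mul ∘ₗ
    (TensorProduct.assoc k (H ⊗[k] H) H H).toLinearMap

/-- The key identity `Φ = E`. -/
lemma PhiE : C.mul ∘ₗ TensorProduct.map C.Jmap LinearMap.id ∘ₗ C.δmap = C.Emap := by
  set Λe : H ⊗[k] H →ₗ[k] H := C.mul ∘ₗ TensorProduct.map C.Jmap C.Khat ∘ₗ C.mid ∘ₗ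
    TensorProduct.map C.comul C.comul with hΛe
  set Λcore : H ⊗[k] (H ⊗[k] H) →ₗ[k] H := C.mul ∘ₗ TensorProduct.map C.Jmap C.Khat ∘ₗ
    C.mid ∘ₗ TensorProduct.map C.comul (LinearMap.id (M := H ⊗[k] H)) with hΛcore
  set Λo : H ⊗[k] H →ₗ[k] H := C.mul ∘ₗ TensorProduct.map C.antipode LinearMap.id ∘ₗ
    C.comul ∘ₗ C.mul ∘ₗ TensorProduct.map LinearMap.id C.antipode with hΛo
  apply TensorProduct.ext'
  intro x b
  simp only [LinearMap.comp_apply]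
  have aux_t2 : ∀ t : H ⊗[k] H,
      C.mul ((TensorProduct.map Λcore LinearMap.id)
        ((TensorProduct.assoc k H (H ⊗[k] H) H).symm
          (x ⊗ₜ[k] ((A1 (k := k) (H := H)).symm
            ((TensorProduct.map LinearMap.id C.comul) t)))))
      = C.mul ((TensorProduct.map C.Jmap LinearMap.id)
          ((A1 (k := k) (H := H)).symm
            ((TensorProduct.map LinearMap.id C.braid)
              ((A1 (k := k) (H := H)) ((C.comul x) ⊗ₜ[k]
                ((TensorProduct.rid k H)
                  ((TensorProduct.map LinearMap.id C.counit) t))))))) := by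
    intro t
    induction t using TensorProduct.induction_on with
    | zero => simp
    | tmul b₁ B =>
      have aux_s : ∀ s : H ⊗[k] H,
          C.mul ((TensorProduct.map Λcore LinearMap.id)
            ((TensorProduct.assoc k H (H ⊗[k] H) H).symm
              (x ⊗ₜ[k] ((A1 (k := k) (H := H)).symm (b₁ ⊗ₜ[k] s)))))
          = C.Gmap ((C.δmap (x ⊗ₜ[k] b₁)) ⊗ₜ[k]
              (C.mul ((TensorProduct.map C.antipode LinearMap.id) s))) := by
        intro s
        induction s using TensorProduct.induction_on with
        | zero => simp
        | tmul p q =>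
          rw [TensorProduct.assoc_symm_tmul, TensorProduct.assoc_symm_tmul]
          rw [TensorProduct.map_tmul, LinearMap.id_apply]
          have aux_w : ∀ w : H ⊗[k] H,
              C.mul ((C.mul ((TensorProduct.map C.Jmap C.Khat)
                  (C.mid (w ⊗ₜ[k] (b₁ ⊗ₜ[k] p))))) ⊗ₜ[k] q)
              = C.Gmap (((A1 (k := k) (H := H)).symm
                  ((TensorProduct.map LinearMap.id C.braid)
                    ((A1 (k := k) (H := H)) (w ⊗ₜ[k] b₁)))) ⊗ₜ[k]
                  (C.mul ((C.antipode p) ⊗ₜ[k] q))) := by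
            intro w
            induction w using TensorProduct.induction_on with
            | zero => simp
            | tmul u v =>
              rw [C.mid_tmul, TensorProduct.assoc_tmul, TensorProduct.map_tmul,
                LinearMap.id_apply]
              have aux_γ : ∀ γ : H ⊗[k] H,
                  C.mul ((C.mul ((TensorProduct.map C.Jmap C.Khat)
                      ((TensorProduct.map (TensorProduct.mk k H H u)
                        ((TensorProduct.mk k H H).flip p)) γ))) ⊗ₜ[k] q)
                  = C.Gmap (((A1 (k := k) (H := H)).symm (u ⊗ₜ[k] γ)) ⊗ₜ[k]
                      (C.mul ((C.antipode p) ⊗ₜ[k] q))) := by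
                intro γ
                induction γ using TensorProduct.induction_on with
                | zero => simp
                | tmul r w' =>
                  simp only [TensorProduct.map_tmul, TensorProduct.mk_apply,
                    LinearMap.flip_apply, TensorProduct.assoc_symm_tmul, Gmap,
                    LinearMap.comp_apply, LinearEquiv.coe_coe, TensorProduct.assoc_tmul,
                    Khat]
                  rw [C.mul_assoc']
                  congr 2
                  exact C.mul_assoc' w' (C.antipode p) q
                | add a c ha hc =>
                  simp only [map_add, TensorProduct.add_tmul, TensorProduct.tmul_add, ha, hc]
              exact aux_γ (C.braid (v ⊗ₜ[k] b₁))
            | add a c ha hc =>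
              simp only [map_add, TensorProduct.add_tmul, TensorProduct.tmul_add, ha, hc]
          have lcore : Λcore (x ⊗ₜ[k] (b₁ ⊗ₜ[k] p))
              = C.mul ((TensorProduct.map C.Jmap C.Khat)
                  (C.mid ((C.comul x) ⊗ₜ[k] (b₁ ⊗ₜ[k] p)))) := by
            simp only [hΛcore, LinearMap.comp_apply, TensorProduct.map_tmul,
              LinearMap.id_apply]
          rw [lcore, aux_w (C.comul x), C.δmap_apply, TensorProduct.map_tmul,
            LinearMap.id_apply]
        | add a c ha hc =>
          simp only [map_add, TensorProduct.tmul_add, TensorProduct.add_tmul, ha, hc]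
      rw [TensorProduct.map_tmul, LinearMap.id_apply]
      rw [aux_s (C.comul B)]
      have colB : C.mul ((TensorProduct.map C.antipode LinearMap.id) (C.comul B))
          = C.counit B • C.one := C.antipode_left B
      rw [colB]
      have aux_G1 : ∀ ζ : (H ⊗[k] H) ⊗[k] H, C.Gmap (ζ ⊗ₜ[k] C.one)
          = C.mul ((TensorProduct.map C.Jmap LinearMap.id) ζ) := by
        intro ζ
        induction ζ using TensorProduct.induction_on with
        | zero => simp
        | tmul t₀ w' =>
          simp only [Gmap, LinearMap.comp_apply, LinearEquiv.coe_coe,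
            TensorProduct.assoc_tmul, TensorProduct.map_tmul, LinearMap.id_apply,
            C.mul_one']
        | add a c ha hc =>
          simp only [map_add, TensorProduct.add_tmul, ha, hc]
      rw [TensorProduct.tmul_smul, map_smul, aux_G1]
      rw [TensorProduct.map_tmul, LinearMap.id_apply, TensorProduct.rid_tmul,
        TensorProduct.tmul_smul, map_smul, map_smul, map_smul, map_smul, map_smul,
        C.δmap_apply]
    | add a c ha hc =>
      simp only [map_add, TensorProduct.tmul_add, ha, hc]
  have aux_b1 : ∀ t : H ⊗[k] H,
      (TensorProduct.map (TensorProduct.map LinearMap.id C.comul) LinearMap.id)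
        ((A1 (k := k) (H := H)).symm (x ⊗ₜ[k] t))
      = (TensorProduct.assoc k H (H ⊗[k] H) H).symm
          (x ⊗ₜ[k] ((TensorProduct.map C.comul LinearMap.id) t)) := by
    intro t
    induction t using TensorProduct.induction_on with
    | zero => simp
    | tmul b₁ B =>
      rw [TensorProduct.assoc_symm_tmul, TensorProduct.map_tmul, TensorProduct.map_tmul,
        LinearMap.id_apply, LinearMap.id_apply, TensorProduct.map_tmul, LinearMap.id_apply,
        TensorProduct.assoc_symm_tmul]
    | add a c ha hc =>
      simp only [map_add, TensorProduct.tmul_add, ha, hc]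
  have cob : (TensorProduct.map C.comul LinearMap.id) (C.comul b)
      = (A1 (k := k) (H := H)).symm
          ((TensorProduct.map LinearMap.id C.comul) (C.comul b)) := by
    have co := LinearMap.congr_fun C.coassoc b
    simp only [LinearMap.comp_apply, LinearEquiv.coe_coe] at co
    rw [← co, LinearEquiv.symm_apply_apply]
  have hsplit : TensorProduct.map Λe (LinearMap.id (M := H))
      = TensorProduct.map Λcore LinearMap.id ∘ₗ
        TensorProduct.map (TensorProduct.map LinearMap.id C.comul) LinearMap.id := by
    rw [← TensorProduct.map_comp, LinearMap.id_comp]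
    congr 1
    rw [hΛe, hΛcore]
    have e0 : TensorProduct.map C.comul (LinearMap.id (M := H ⊗[k] H)) ∘ₗ
        TensorProduct.map (LinearMap.id (M := H)) C.comul
        = TensorProduct.map C.comul C.comul := by
      rw [← TensorProduct.map_comp, LinearMap.comp_id, LinearMap.id_comp]
    calc C.mul ∘ₗ TensorProduct.map C.Jmap C.Khat ∘ₗ C.mid ∘ₗ
          TensorProduct.map C.comul C.comul
        = C.mul ∘ₗ TensorProduct.map C.Jmap C.Khat ∘ₗ C.mid ∘ₗ
          (TensorProduct.map C.comul (LinearMap.id (M := H ⊗[k] H)) ∘ₗ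
            TensorProduct.map (LinearMap.id (M := H)) C.comul) := by rw [e0]
      _ = (C.mul ∘ₗ TensorProduct.map C.Jmap C.Khat ∘ₗ C.mid ∘ₗ
          TensorProduct.map C.comul (LinearMap.id (M := H ⊗[k] H))) ∘ₗ
            TensorProduct.map (LinearMap.id (M := H)) C.comul := rfl
  have evalI : ∀ t : H ⊗[k] H,
      C.mul ((TensorProduct.map Λo LinearMap.id)
        ((A1 (k := k) (H := H)).symm (x ⊗ₜ[k] t)))
      = C.counit x • ((TensorProduct.lid k H)
          ((TensorProduct.map C.counit LinearMap.id) t)) := by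
    intro t
    induction t using TensorProduct.induction_on with
    | zero => simp
    | tmul b₁ B =>
      rw [TensorProduct.assoc_symm_tmul, TensorProduct.map_tmul, LinearMap.id_apply]
      have lo : Λo (x ⊗ₜ[k] b₁) = (C.counit x * C.counit b₁) • C.one := by
        simp only [hΛo, LinearMap.comp_apply, TensorProduct.map_tmul, LinearMap.id_apply]
        have := C.antipode_left (C.mul (x ⊗ₜ[k] C.antipode b₁))
        rw [this, C.counit_mul, C.counit_antipode]
      rw [lo, ← TensorProduct.smul_tmul', map_smul, C.one_mul']
      simp [smul_smul]
    | add a c ha hc =>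
      simp only [map_add, TensorProduct.tmul_add, ha, hc, smul_add]
  have lhs_eq : C.mul ((TensorProduct.map C.Jmap LinearMap.id) (C.δmap (x ⊗ₜ[k] b)))
      = C.mul ((TensorProduct.map Λe LinearMap.id)
          ((A1 (k := k) (H := H)).symm (x ⊗ₜ[k] C.comul b))) := by
    rw [C.δmap_apply]
    have t2 := aux_t2 (C.comul b)
    rw [C.counit_right] at t2
    rw [← t2]
    rw [LinearMap.congr_fun hsplit ((A1 (k := k) (H := H)).symm (x ⊗ₜ[k] C.comul b))]
    simp only [LinearMap.comp_apply]
    rw [aux_b1 (C.comul b), cob]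
  rw [lhs_eq, hΛe, ← C.lam_exp, ← hΛo, evalI (C.comul b), C.counit_left]
  simp

/-- `h ⊚ J = E` -/
lemma hJ : C.con C.hmap C.Jmap = C.Emap := by
  apply TensorProduct.ext'
  intro x b
  rw [C.con_apply]
  have step1 : ∀ t : H ⊗[k] (H ⊗[k] H),
      C.hmap ((TensorProduct.map LinearMap.id C.Jmap) t)
        = C.mul ((TensorProduct.map C.Jmap LinearMap.id) (C.cR t)) := by
    intro t
    have b1 := LinearMap.congr_fun (C.blockR C.Jmap C.gm_Jmap) t
    simp only [LinearMap.comp_apply] at b1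
    simp only [hmap, LinearMap.comp_apply]
    rw [b1]
  rw [step1, C.cR_A1]
  have cc := LinearMap.congr_fun C.cocomm x
  simp only [LinearMap.comp_apply] at cc
  rw [cc, ← C.δmap_apply]
  have := LinearMap.congr_fun C.PhiE (x ⊗ₜ[k] b)
  simp only [LinearMap.comp_apply] at this
  rw [this, Emap_apply]

lemma JK : C.Jmap = C.Kmap := by
  calc C.Jmap = C.con C.Emap C.Jmap := (C.con_unit_left _).symm
    _ = C.con (C.con C.Kmap C.hmap) C.Jmap := by rw [C.Kh]
    _ = C.con C.Kmap (C.con C.hmap C.Jmap) := C.con_assoc _ _ _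
    _ = C.con C.Kmap C.Emap := by rw [C.hJ]
    _ = C.Kmap := C.con_unit_right _

lemma SS_map : TensorProduct.map (LinearMap.id (M := H)) C.antipode ∘ₗ
    TensorProduct.map LinearMap.id C.antipode = LinearMap.id := by
  rw [← TensorProduct.map_comp, C.antipode_antipode, LinearMap.id_comp,
    TensorProduct.map_id]

lemma S_Kmap : C.antipode ∘ₗ C.Kmap = C.Khat := by
  have e1 : C.antipode ∘ₗ C.Kmap = C.Jmap ∘ₗ C.braid := rfl
  rw [e1, C.JK]
  have e2 : C.Kmap ∘ₗ C.braid = C.Khat ∘ₗ (C.braid ∘ₗ C.braid) := rfl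
  rw [e2, C.braid_braid, LinearMap.comp_id]

lemma S_mul_pointwise : ∀ z : H ⊗[k] H,
    C.antipode (C.mul z) = C.Jmap ((TensorProduct.map LinearMap.id C.antipode) z) := by
  intro z
  simp only [Jmap, LinearMap.comp_apply]
  congr 1
  congr 1
  exact (LinearMap.congr_fun C.SS_map z).symm

lemma adj_eq : C.adj = C.mul ∘ₗ TensorProduct.map LinearMap.id C.Kmap ∘ₗ
    (A1 (k := k) (H := H)).toLinearMap ∘ₗ TensorProduct.map C.comul LinearMap.id := rfl

/-- The main map-level statement. -/
lemma antipode_adj_map :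
    C.antipode ∘ₗ C.adj = C.adj ∘ₗ TensorProduct.map LinearMap.id C.antipode := by
  apply TensorProduct.ext'
  intro a b
  simp only [LinearMap.comp_apply, TensorProduct.map_tmul, LinearMap.id_apply]
  rw [C.adj_eq]
  simp only [LinearMap.comp_apply, LinearEquiv.coe_coe, TensorProduct.map_tmul,
    LinearMap.id_apply]
  rw [C.S_mul_pointwise]
  have m1 : TensorProduct.map (LinearMap.id (M := H)) C.antipode ∘ₗ
      TensorProduct.map LinearMap.id C.Kmap
      = TensorProduct.map LinearMap.id C.Khat := by
    rw [← TensorProduct.map_comp, C.S_Kmap, LinearMap.id_comp]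
  have m1' := LinearMap.congr_fun m1
    ((A1 (k := k) (H := H)) ((C.comul a) ⊗ₜ[k] b))
  simp only [LinearMap.comp_apply] at m1'
  rw [m1', C.JK]
  have step : ∀ t : H ⊗[k] (H ⊗[k] H),
      C.Kmap ((TensorProduct.map LinearMap.id C.Khat) t)
        = C.mul ((TensorProduct.map C.Khat C.antipode) (C.cR t)) := by
    intro t
    have b1 := LinearMap.congr_fun (C.blockR C.Khat C.gm_Khat) t
    simp only [LinearMap.comp_apply] at b1
    simp only [Kmap, LinearMap.comp_apply]
    rw [b1]
    congr 1
    have mc := TensorProduct.map_comp (LinearMap.id (M := H)) C.antipode C.Khat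
      (LinearMap.id (M := H))
    have := LinearMap.congr_fun mc (C.cR t)
    simp only [LinearMap.comp_apply, LinearMap.comp_id, LinearMap.id_comp] at this
    rw [← this]
  rw [step, C.cR_A1]
  have cc := LinearMap.congr_fun C.cocomm a
  simp only [LinearMap.comp_apply] at cc
  rw [cc]
  have final : ∀ w : H ⊗[k] H,
      C.mul ((TensorProduct.map C.Khat C.antipode)
        ((A1 (k := k) (H := H)).symm
          ((TensorProduct.map LinearMap.id C.braid)
            ((A1 (k := k) (H := H)) (w ⊗ₜ[k] b)))))
      = C.mul ((TensorProduct.map LinearMap.id C.Kmap)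
          ((A1 (k := k) (H := H)) (w ⊗ₜ[k] (C.antipode b)))) := by
    intro w
    induction w using TensorProduct.induction_on with
    | zero => simp
    | tmul u v =>
      rw [TensorProduct.assoc_tmul, TensorProduct.map_tmul, LinearMap.id_apply,
        TensorProduct.assoc_tmul, TensorProduct.map_tmul, LinearMap.id_apply]
      have kv : C.Kmap (v ⊗ₜ[k] C.antipode b)
          = C.mul ((TensorProduct.map C.antipode C.antipode) (C.braid (v ⊗ₜ[k] b))) := by
        simp only [Kmap, LinearMap.comp_apply]
        have ba := LinearMap.congr_fun C.braid_id_antipode (v ⊗ₜ[k] b)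
        simp only [LinearMap.comp_apply, TensorProduct.map_tmul, LinearMap.id_apply] at ba
        rw [ba]
        congr 1
        have mc := TensorProduct.map_comp (LinearMap.id (M := H)) C.antipode
          C.antipode (LinearMap.id (M := H))
        have := LinearMap.congr_fun mc (C.braid (v ⊗ₜ[k] b))
        simp only [LinearMap.comp_apply, LinearMap.comp_id, LinearMap.id_comp] at this
        rw [← this]
      rw [kv]
      have inner : ∀ γ : H ⊗[k] H,
          C.mul ((TensorProduct.map C.Khat C.antipode)
            ((A1 (k := k) (H := H)).symm (u ⊗ₜ[k] γ)))
          = C.mul (u ⊗ₜ[k] (C.mul ((TensorProduct.map C.antipode C.antipode) γ))) := by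
        intro γ
        induction γ using TensorProduct.induction_on with
        | zero => simp
        | tmul r w' =>
          rw [TensorProduct.assoc_symm_tmul, TensorProduct.map_tmul,
            TensorProduct.map_tmul]
          simp only [Khat, LinearMap.comp_apply, TensorProduct.map_tmul,
            LinearMap.id_apply]
          exact C.mul_assoc' u (C.antipode r) (C.antipode w')
        | add a c ha hc =>
          simp only [map_add, TensorProduct.tmul_add, ha, hc]
      exact inner (C.braid (v ⊗ₜ[k] b))
    | add a c ha hc =>
      simp only [map_add, TensorProduct.add_tmul, ha, hc]
  exact final (C.comul a)

end Aux5

end Aux3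

end Aux

end ColorHopfAlg

section Statements

variable {H : Type*} [AddCommGroup H] [Module k H]

/-- `S(a ▷ b) = a ▷ S(b)` for homogeneous `a, b` in a cocommutative
color Hopf algebra. -/
theorem antipode_adj (C : ColorHopfAlg k G H) :
    ∀ a b : H, C.homogeneous a → C.homogeneous b →
      C.antipode (C.adj (a ⊗ₜ[k] b)) = C.adj (a ⊗ₜ[k] C.antipode b) := by
  intro a b _ _
  have h := LinearMap.congr_fun C.antipode_adj_map (a ⊗ₜ[k] b)
  simpa using h

end Statements

end ColorHopfPaper
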